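/- arXiv:math/0611841 — 4 statements merged into one kernel-verified Lean document; each statement's English description precedes it below -/
import Mathlib

section
/- Let G be a toroidal grid diagram of size n representing a knot. Then the canonical generator x^UR satisfies M(x^UR) = tb(G) − r(G) + 1 and A(x^UR) = (tb(G) − r(G) + 1)/2, where tb(G) = −writhe(K) − (1/2)·#{cusps of G} and r(G) = (1/2)·(#{downward cusps of G} − #{upward cusps of G}) are the Thurston–Bennequin invariant and rotation number of the oriented Legendrian knot associated to G. -/
open Finset

noncomputable section

open scoped Classical

/-- A formal rational-coefficient combination of points in the plane. -/
abbrev PtComb := (ℝ × ℝ) →₀ ℚ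

/-- `I(A,B)`: the number of pairs `(a, b) ∈ A × B` with `a₁ < b₁` and `a₂ < b₂`,
extended bilinearly to formal combinations of finite point sets. -/
def Ifun (f g : PtComb) : ℚ :=
  ∑ p ∈ f.support, ∑ q ∈ g.support,
    if p.1 < q.1 ∧ p.2 < q.2 then f p * g q else 0

/-- `J(A,B) = (I(A,B) + I(B,A))/2`. -/
def Jfun (f g : PtComb) : ℚ := (Ifun f g + Ifun g f) / 2

/-- A toroidal grid diagram of size `n`: a pair of permutations `σX`, `σO` of
`{0, …, n-1}` with `σX i ≠ σO i` for all `i`. -/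
structure Grid (n : ℕ) where
  σX : Equiv.Perm (Fin n)
  σO : Equiv.Perm (Fin n)
  disj : ∀ i, σX i ≠ σO i

namespace Grid

variable {n : ℕ}

/-- `G` represents a knot: the permutation `σO⁻¹ ∘ σX` has a single orbit,
i.e. it is an `n`-cycle. -/
def RepKnot (G : Grid n) : Prop :=
  ∀ i j : Fin n, ∃ k : ℕ, ((G.σO⁻¹ * G.σX) ^ k) i = j

/-- The `X`-marking of column `i`, at the planar point `(i + 1/2, σX i + 1/2)`. -/
def Xpt (G : Grid n) (i : Fin n) : ℝ × ℝ :=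
  (((i : ℕ) : ℝ) + 1/2, ((G.σX i : ℕ) : ℝ) + 1/2)

/-- The `O`-marking of column `i`, at the planar point `(i + 1/2, σO i + 1/2)`. -/
def Opt (G : Grid n) (i : Fin n) : ℝ × ℝ :=
  (((i : ℕ) : ℝ) + 1/2, ((G.σO i : ℕ) : ℝ) + 1/2)

/-- The set `𝕏` of `X`-markings, as a formal point combination. -/
def XX (G : Grid n) : PtComb := ∑ i : Fin n, Finsupp.single (G.Xpt i) 1

/-- The set `𝕆` of `O`-markings, as a formal point combination. -/
def OO (G : Grid n) : PtComb := ∑ i : Fin n, Finsupp.single (G.Opt i) 1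

/-- The point set `{(i, x i)}` of a generator `x`, as a formal point combination. -/
def pts (x : Equiv.Perm (Fin n)) : PtComb :=
  ∑ i : Fin n, Finsupp.single (((i : ℕ) : ℝ), ((x i : ℕ) : ℝ)) 1

/-- The Maslov grading `M(x) = J(x − 𝕆, x − 𝕆) + 1`. -/
def M (G : Grid n) (x : Equiv.Perm (Fin n)) : ℚ :=
  Jfun (pts x - G.OO) (pts x - G.OO) + 1

/-- The `X`-Maslov grading `M_𝕏(x) = J(x − 𝕏, x − 𝕏) + 1`. -/
def MX (G : Grid n) (x : Equiv.Perm (Fin n)) : ℚ :=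
  Jfun (pts x - G.XX) (pts x - G.XX) + 1

/-- The Alexander grading `A(x) = J(x − (𝕏+𝕆)/2, 𝕏 − 𝕆) − (n−1)/2`. -/
def A (G : Grid n) (x : Equiv.Perm (Fin n)) : ℚ :=
  Jfun (pts x - (2 : ℚ)⁻¹ • (G.XX + G.OO)) (G.XX - G.OO) - ((n : ℚ) - 1) / 2

/-- The canonical generator `x^LL`, whose points are the lower-left corners of the
`X`-marked squares. -/
def xLL (G : Grid n) : Equiv.Perm (Fin n) := G.σX

/-- The canonical generator `x^UR`, `x^UR(i) = σX((i−1) mod n) + 1 (mod n)`, whose points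
are the upper-right corners of the `X`-marked squares (reduced mod `n`). -/
def xUR [NeZero n] (G : Grid n) : Equiv.Perm (Fin n) where
  toFun i := G.σX (i - 1) + 1
  invFun i := G.σX.symm (i - 1) + 1
  left_inv i := by simp
  right_inv i := by simp

end Grid

namespace Grid

variable {n : ℕ}

/-- The vertical segment of column `i` (from `X_i` to `O_i`) and the horizontal segment
of row `j` (from the `O` of row `j` to the `X` of row `j`) cross transversally in the
interiors of both segments. -/
def Crossing (G : Grid n) (i j : Fin n) : Prop :=
  min (G.σX i) (G.σO i) < j ∧ j < max (G.σX i) (G.σO i) ∧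
  min (G.σX.symm j) (G.σO.symm j) < i ∧ i < max (G.σX.symm j) (G.σO.symm j)

/-- The sign of the crossing of the vertical segment of column `i` with the horizontal
segment of row `j`: it is `+1` iff `det(v, h) > 0`, where `v` points from `X_i` to `O_i`
and `h` points from the `O`-marking of row `j` to its `X`-marking. -/
def crossSign (G : Grid n) (i j : Fin n) : ℤ :=
  if ((G.σX i < G.σO i) ↔ (G.σO.symm j < G.σX.symm j)) then -1 else 1

/-- The writhe of the planar diagram `D(G)`: the sum of the signs of all crossings. -/
def writhe (G : Grid n) : ℤ :=
  ∑ p : Fin n × Fin n, if G.Crossing p.1 p.2 then G.crossSign p.1 p.2 else 0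

/-- `X_i` is a NE corner: the `O`-marking of its row lies strictly to its left, and
`σO i < σX i`. -/
def XNE (G : Grid n) (i : Fin n) : Prop :=
  G.σO.symm (G.σX i) < i ∧ G.σO i < G.σX i

/-- `X_i` is a SW corner: the `O`-marking of its row lies strictly to its right, and
`σO i > σX i`. -/
def XSW (G : Grid n) (i : Fin n) : Prop :=
  i < G.σO.symm (G.σX i) ∧ G.σX i < G.σO i

/-- `O_i` is a NE corner: the `X`-marking of its row lies strictly to its left, and
`σX i < σO i`. -/
def ONE (G : Grid n) (i : Fin n) : Prop :=
  G.σX.symm (G.σO i) < i ∧ G.σX i < G.σO i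

/-- `O_i` is a SW corner: the `X`-marking of its row lies strictly to its right, and
`σX i > σO i`. -/
def OSW (G : Grid n) (i : Fin n) : Prop :=
  i < G.σX.symm (G.σO i) ∧ G.σO i < G.σX i

/-- The number of downward-oriented cusps: `X`-markings that are NE corners together
with `O`-markings that are SW corners. -/
def downCusps (G : Grid n) : ℕ :=
  (univ.filter fun i => G.XNE i).card + (univ.filter fun i => G.OSW i).card

/-- The number of upward-oriented cusps: `O`-markings that are NE corners together
with `X`-markings that are SW corners. -/
def upCusps (G : Grid n) : ℕ :=
  (univ.filter fun i => G.ONE i).card + (univ.filter fun i => G.XSW i).card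

/-- The total number of cusps (markings that are NE or SW corners). -/
def cusps (G : Grid n) : ℕ := G.downCusps + G.upCusps

/-- The Thurston–Bennequin invariant of the Legendrian knot associated to `G`:
`tb = −writhe − (1/2)·#cusps`. -/
def tb (G : Grid n) : ℚ := -(G.writhe : ℚ) - (G.cusps : ℚ) / 2

/-- The rotation number of the oriented Legendrian knot associated to `G`:
`r = (1/2)·(#downward cusps − #upward cusps)`. -/
def rot (G : Grid n) : ℚ := ((G.downCusps : ℚ) - (G.upCusps : ℚ)) / 2

end Grid

section Toolkit

lemma Ifun_eq_sum_subset (f g : PtComb) {S T : Finset (ℝ × ℝ)}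
    (hf : f.support ⊆ S) (hg : g.support ⊆ T) :
    Ifun f g = ∑ p ∈ S, ∑ q ∈ T, if p.1 < q.1 ∧ p.2 < q.2 then f p * g q else 0 := by
  have h1 : ∀ p : ℝ × ℝ, ∑ q ∈ g.support, (if p.1 < q.1 ∧ p.2 < q.2 then f p * g q else 0)
      = ∑ q ∈ T, (if p.1 < q.1 ∧ p.2 < q.2 then f p * g q else 0) := by
    intro p
    refine Finset.sum_subset hg ?_
    intro q _ hq'
    simp [Finsupp.notMem_support_iff.mp hq']
  rw [Ifun]
  simp_rw [h1]
  refine Finset.sum_subset hf ?_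
  intro p _ hp'
  simp [Finsupp.notMem_support_iff.mp hp']

lemma Ifun_zero_left (g : PtComb) : Ifun 0 g = 0 := by simp [Ifun]

lemma Ifun_zero_right (f : PtComb) : Ifun f 0 = 0 := by simp [Ifun]

lemma Ifun_add_left (f₁ f₂ g : PtComb) : Ifun (f₁ + f₂) g = Ifun f₁ g + Ifun f₂ g := by
  have hS : (f₁ + f₂).support ⊆ f₁.support ∪ f₂.support := Finsupp.support_add
  rw [Ifun_eq_sum_subset (f₁ + f₂) g hS subset_rfl,
      Ifun_eq_sum_subset f₁ g Finset.subset_union_left subset_rfl,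
      Ifun_eq_sum_subset f₂ g Finset.subset_union_right subset_rfl,
      ← Finset.sum_add_distrib]
  refine Finset.sum_congr rfl fun p _ => ?_
  rw [← Finset.sum_add_distrib]
  refine Finset.sum_congr rfl fun q _ => ?_
  by_cases hc : p.1 < q.1 ∧ p.2 < q.2 <;> simp [hc, add_mul]

lemma Ifun_add_right (f g₁ g₂ : PtComb) : Ifun f (g₁ + g₂) = Ifun f g₁ + Ifun f g₂ := by
  have hS : (g₁ + g₂).support ⊆ g₁.support ∪ g₂.support := Finsupp.support_add
  rw [Ifun_eq_sum_subset f (g₁ + g₂) subset_rfl hS,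
      Ifun_eq_sum_subset f g₁ subset_rfl Finset.subset_union_left,
      Ifun_eq_sum_subset f g₂ subset_rfl Finset.subset_union_right,
      ← Finset.sum_add_distrib]
  refine Finset.sum_congr rfl fun p _ => ?_
  rw [← Finset.sum_add_distrib]
  refine Finset.sum_congr rfl fun q _ => ?_
  by_cases hc : p.1 < q.1 ∧ p.2 < q.2 <;> simp [hc, mul_add]

lemma Ifun_smul_left (c : ℚ) (f g : PtComb) : Ifun (c • f) g = c * Ifun f g := by
  rw [Ifun_eq_sum_subset (c • f) g Finsupp.support_smul subset_rfl,
      Ifun_eq_sum_subset f g subset_rfl subset_rfl, Finset.mul_sum]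
  refine Finset.sum_congr rfl fun p _ => ?_
  rw [Finset.mul_sum]
  refine Finset.sum_congr rfl fun q _ => ?_
  by_cases hc : p.1 < q.1 ∧ p.2 < q.2 <;> simp [hc] <;> ring

lemma Ifun_smul_right (c : ℚ) (f g : PtComb) : Ifun f (c • g) = c * Ifun f g := by
  rw [Ifun_eq_sum_subset f (c • g) subset_rfl Finsupp.support_smul,
      Ifun_eq_sum_subset f g subset_rfl subset_rfl, Finset.mul_sum]
  refine Finset.sum_congr rfl fun p _ => ?_
  rw [Finset.mul_sum]
  refine Finset.sum_congr rfl fun q _ => ?_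
  by_cases hc : p.1 < q.1 ∧ p.2 < q.2 <;> simp [hc] <;> ring

lemma Ifun_neg_left (f g : PtComb) : Ifun (-f) g = -Ifun f g := by
  rw [← neg_one_smul ℚ f, Ifun_smul_left]; ring

lemma Ifun_neg_right (f g : PtComb) : Ifun f (-g) = -Ifun f g := by
  rw [← neg_one_smul ℚ g, Ifun_smul_right]; ring

lemma Ifun_sub_left (f₁ f₂ g : PtComb) : Ifun (f₁ - f₂) g = Ifun f₁ g - Ifun f₂ g := by
  rw [sub_eq_add_neg, Ifun_add_left, Ifun_neg_left]; ring

lemma Ifun_sub_right (f g₁ g₂ : PtComb) : Ifun f (g₁ - g₂) = Ifun f g₁ - Ifun f g₂ := by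
  rw [sub_eq_add_neg, Ifun_add_right, Ifun_neg_right]; ring

lemma Ifun_sum_left {ι : Type*} (s : Finset ι) (f : ι → PtComb) (g : PtComb) :
    Ifun (∑ i ∈ s, f i) g = ∑ i ∈ s, Ifun (f i) g := by
  induction s using Finset.cons_induction with
  | empty => simp [Ifun_zero_left]
  | cons i s his ih => rw [Finset.sum_cons, Finset.sum_cons, Ifun_add_left, ih]

lemma Ifun_sum_right {ι : Type*} (s : Finset ι) (f : PtComb) (g : ι → PtComb) :
    Ifun f (∑ i ∈ s, g i) = ∑ i ∈ s, Ifun f (g i) := by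
  induction s using Finset.cons_induction with
  | empty => simp [Ifun_zero_right]
  | cons i s his ih => rw [Finset.sum_cons, Finset.sum_cons, Ifun_add_right, ih]

lemma Ifun_single_single (p q : ℝ × ℝ) (c d : ℚ) :
    Ifun (Finsupp.single p c) (Finsupp.single q d) =
      if p.1 < q.1 ∧ p.2 < q.2 then c * d else 0 := by
  by_cases hc : c = 0
  · simp [hc, Ifun]
  by_cases hd : d = 0
  · simp [hd, Ifun]
  rw [Ifun, Finsupp.support_single_ne_zero _ hc, Finsupp.support_single_ne_zero _ hd]
  simp

lemma Jfun_self (f : PtComb) : Jfun f f = Ifun f f := by rw [Jfun]; ring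

end Toolkit
section Indicators

/-- Rational-valued indicator of a proposition. -/
def indQ (P : Prop) [Decidable P] : ℚ := if P then 1 else 0

lemma indQ_congr {P Q : Prop} [Decidable P] [Decidable Q] (h : P ↔ Q) : indQ P = indQ Q := by
  unfold indQ; simp [h]

lemma indQ_and (P Q : Prop) [Decidable P] [Decidable Q] :
    indQ (P ∧ Q) = indQ P * indQ Q := by
  unfold indQ; by_cases hP : P <;> by_cases hQ : Q <;> simp [hP, hQ]

lemma indQ_mul (P : Prop) [Decidable P] (x : ℚ) : indQ P * x = if P then x else 0 := by
  unfold indQ; split_ifs <;> simp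

lemma mul_indQ (P : Prop) [Decidable P] (x : ℚ) : x * indQ P = if P then x else 0 := by
  unfold indQ; split_ifs <;> simp

variable {m : ℕ}

lemma sum_indQ_gt (c : Fin (m+1)) :
    ∑ v : Fin (m+1), indQ ((c:ℕ) < (v:ℕ)) = (m : ℚ) - ((c:ℕ) : ℚ) := by
  unfold indQ
  rw [Finset.sum_boole]
  have h : Finset.univ.filter (fun v : Fin (m+1) => (c:ℕ) < (v:ℕ)) = Finset.Ioi c := by
    ext v
    simp only [Finset.mem_filter, Finset.mem_univ, true_and, Finset.mem_Ioi]
    exact Fin.lt_def.symm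
  rw [h, Fin.card_Ioi]
  have hc : (c:ℕ) ≤ m := Nat.lt_succ_iff.mp c.isLt
  have h2 : m + 1 - 1 - (c:ℕ) = m - (c:ℕ) := by omega
  rw [h2, Nat.cast_sub hc]

lemma sum_indQ_le (c : Fin (m+1)) :
    ∑ v : Fin (m+1), indQ ((v:ℕ) ≤ (c:ℕ)) = ((c:ℕ) : ℚ) + 1 := by
  unfold indQ
  rw [Finset.sum_boole]
  have h : Finset.univ.filter (fun v : Fin (m+1) => (v:ℕ) ≤ (c:ℕ)) = Finset.Iic c := by
    ext v
    simp only [Finset.mem_filter, Finset.mem_univ, true_and, Finset.mem_Iic]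
    exact Fin.le_def.symm
  rw [h, Fin.card_Iic]
  push_cast
  ring

lemma sum_indQ_lt (c : Fin (m+1)) :
    ∑ v : Fin (m+1), indQ ((v:ℕ) < (c:ℕ)) = ((c:ℕ) : ℚ) := by
  unfold indQ
  rw [Finset.sum_boole]
  have h : Finset.univ.filter (fun v : Fin (m+1) => (v:ℕ) < (c:ℕ)) = Finset.Iio c := by
    ext v
    simp only [Finset.mem_filter, Finset.mem_univ, true_and, Finset.mem_Iio]
    exact Fin.lt_def.symm
  rw [h, Fin.card_Iio]

lemma sum_one_fin : ∑ _v : Fin (m+1), (1:ℚ) = (m:ℚ) + 1 := by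
  rw [Finset.sum_const, Finset.card_univ, Fintype.card_fin, nsmul_eq_mul]
  push_cast
  ring

lemma sum_pin (α : Fin (m+1)) (f : Fin (m+1) → ℚ) :
    ∑ i, indQ (i = α) * f i = f α := by
  unfold indQ
  simp [ite_mul, Finset.sum_ite_eq']

lemma sum_pin' (α : Fin (m+1)) (f : Fin (m+1) → ℚ) :
    ∑ i, f i * indQ (i = α) = f α := by
  unfold indQ
  simp [mul_ite, Finset.sum_ite_eq']

lemma reindex_add_one (g : Fin (m+1) → ℚ) : ∑ i, g (i + 1) = ∑ i, g i := by
  simpa using Equiv.sum_comp (Equiv.addRight (1 : Fin (m+1))) g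

lemma reindex_add_one2 (F : Fin (m+1) → Fin (m+1) → ℚ) :
    ∑ i, ∑ j, F i j = ∑ i, ∑ j, F (i + 1) (j + 1) := by
  rw [show ∑ i, ∑ j, F (i+1) (j+1) = ∑ i, ∑ j, F (i+1) j from
    Finset.sum_congr rfl fun i _ => reindex_add_one _]
  exact (reindex_add_one (fun i => ∑ j, F i j)).symm

lemma reindex_add_one_left (F : Fin (m+1) → Fin (m+1) → ℚ) :
    ∑ i, ∑ j, F i j = ∑ i, ∑ j, F (i + 1) j :=
  (reindex_add_one (fun i => ∑ j, F i j)).symm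

lemma reindex_perm (σ : Equiv.Perm (Fin (m+1))) (g : Fin (m+1) → ℚ) :
    ∑ i, g (σ i) = ∑ i, g i := Equiv.sum_comp σ g

lemma fin_eq_last_iff (u : Fin (m+1)) : u = Fin.last m ↔ (u:ℕ) = m := by
  rw [Fin.ext_iff, Fin.val_last]

/-- `(u+1).val < (v+1).val` decomposes linearly. -/
lemma key_lt_lt (u v : Fin (m+1)) :
    indQ (((u+1 : Fin (m+1)):ℕ) < ((v+1 : Fin (m+1)):ℕ)) =
      indQ ((u:ℕ) < (v:ℕ)) + indQ (u = Fin.last m) - indQ (v = Fin.last m) := by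
  have hu := u.isLt
  have hv := v.isLt
  unfold indQ
  rw [Fin.val_add_one, Fin.val_add_one]
  simp only [fin_eq_last_iff]
  split_ifs <;> (first | (exfalso; omega) | norm_num)

/-- `(u+1).val ≤ c` decomposes linearly (for `c ≤ m`). -/
lemma key_succ_le (u : Fin (m+1)) (c : ℕ) (hc : c ≤ m) :
    indQ (((u+1 : Fin (m+1)):ℕ) ≤ c) = indQ ((u:ℕ) < c) + indQ (u = Fin.last m) := by
  have hu := u.isLt
  unfold indQ
  rw [Fin.val_add_one]
  simp only [fin_eq_last_iff]
  split_ifs <;> (first | (exfalso; omega) | norm_num)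

/-- `c < (u+1).val` decomposes linearly (for `c ≤ m`). -/
lemma key_lt_succ (u : Fin (m+1)) (c : ℕ) (hc : c ≤ m) :
    indQ (c < ((u+1 : Fin (m+1)):ℕ)) = indQ (c ≤ (u:ℕ)) - indQ (u = Fin.last m) := by
  have hu := u.isLt
  unfold indQ
  rw [Fin.val_add_one]
  simp only [fin_eq_last_iff]
  split_ifs <;> (first | (exfalso; omega) | norm_num)

end Indicators
section Counting

variable {m : ℕ}

lemma sum2_add (f g : Fin (m+1) → Fin (m+1) → ℚ) :
    ∑ i : Fin (m+1), ∑ j : Fin (m+1), (f i j + g i j) = (∑ i : Fin (m+1), ∑ j : Fin (m+1), f i j) + ∑ i : Fin (m+1), ∑ j : Fin (m+1), g i j := by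
  simp [Finset.sum_add_distrib]

lemma sum2_sub (f g : Fin (m+1) → Fin (m+1) → ℚ) :
    ∑ i : Fin (m+1), ∑ j : Fin (m+1), (f i j - g i j) = (∑ i : Fin (m+1), ∑ j : Fin (m+1), f i j) - ∑ i : Fin (m+1), ∑ j : Fin (m+1), g i j := by
  simp [Finset.sum_sub_distrib]

/-- Count of ordered pairs `i < j` with `σ i < τ j`. -/
def cnt2 (σ τ : Equiv.Perm (Fin (m+1))) : ℚ :=
  ∑ i : Fin (m+1), ∑ j : Fin (m+1), indQ ((i:ℕ) < (j:ℕ)) * indQ ((σ i:ℕ) < (τ j:ℕ))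

/-- NE-corner count. -/
def cNE (a b : Equiv.Perm (Fin (m+1))) : ℚ :=
  ∑ i : Fin (m+1), indQ ((b.symm (a i):ℕ) < (i:ℕ)) * indQ ((b i:ℕ) < (a i:ℕ))

/-- SW-corner count. -/
def cSW (a b : Equiv.Perm (Fin (m+1))) : ℚ :=
  ∑ i : Fin (m+1), indQ ((i:ℕ) < (b.symm (a i):ℕ)) * indQ ((a i:ℕ) < (b i:ℕ))

/-- `#{i : a i < b i}`. -/
def cU (a b : Equiv.Perm (Fin (m+1))) : ℚ := ∑ i : Fin (m+1), indQ ((a i:ℕ) < (b i:ℕ))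

lemma cnt2_swap (σ τ : Equiv.Perm (Fin (m+1))) :
    ∑ i : Fin (m+1), ∑ j : Fin (m+1), indQ ((j:ℕ) < (i:ℕ)) * indQ ((τ j:ℕ) < (σ i:ℕ)) = cnt2 τ σ := by
  rw [Finset.sum_comm]; rfl

lemma EV1 (σ : Equiv.Perm (Fin (m+1))) :
    ∑ i : Fin (m+1), ∑ j : Fin (m+1), indQ ((i:ℕ) < (j:ℕ)) * indQ (σ i = Fin.last m)
      = (m:ℚ) - ((σ.symm (Fin.last m):ℕ):ℚ) := by
  have step : ∀ i : Fin (m+1), ∑ j : Fin (m+1), indQ ((i:ℕ) < (j:ℕ)) * indQ (σ i = Fin.last m)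
      = indQ (i = σ.symm (Fin.last m)) * ∑ j : Fin (m+1), indQ ((i:ℕ) < (j:ℕ)) := by
    intro i
    rw [Finset.mul_sum]
    refine Finset.sum_congr rfl fun j _ => ?_
    rw [mul_comm, indQ_congr (Equiv.apply_eq_iff_eq_symm_apply σ)]
  rw [Finset.sum_congr rfl fun i _ => step i, sum_pin]
  exact sum_indQ_gt _

lemma EV2 (σ : Equiv.Perm (Fin (m+1))) :
    ∑ i : Fin (m+1), ∑ j : Fin (m+1), indQ ((i:ℕ) < (j:ℕ)) * indQ (σ j = Fin.last m)
      = ((σ.symm (Fin.last m):ℕ):ℚ) := by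
  have step : ∀ i : Fin (m+1), ∑ j : Fin (m+1), indQ ((i:ℕ) < (j:ℕ)) * indQ (σ j = Fin.last m)
      = indQ ((i:ℕ) < ((σ.symm (Fin.last m)):ℕ)) := by
    intro i
    simp only [show ∀ j : Fin (m+1), indQ ((i:ℕ) < (j:ℕ)) * indQ (σ j = Fin.last m)
        = indQ (j = σ.symm (Fin.last m)) * indQ ((i:ℕ) < (j:ℕ)) from fun j => by
      rw [mul_comm, indQ_congr (Equiv.apply_eq_iff_eq_symm_apply σ)]]
    exact sum_pin _ (fun j => indQ ((i:ℕ) < (j:ℕ)))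
  rw [Finset.sum_congr rfl fun i _ => step i]
  exact sum_indQ_lt _

lemma EV3 (σ τ : Equiv.Perm (Fin (m+1))) :
    ∑ i : Fin (m+1), ∑ j : Fin (m+1), indQ (i = Fin.last m) * indQ ((σ i:ℕ) < (τ j:ℕ))
      = (m:ℚ) - ((σ (Fin.last m):ℕ):ℚ) := by
  have step : ∀ i : Fin (m+1), ∑ j : Fin (m+1), indQ (i = Fin.last m) * indQ ((σ i:ℕ) < (τ j:ℕ))
      = indQ (i = Fin.last m) * ∑ j : Fin (m+1), indQ ((σ i:ℕ) < (τ j:ℕ)) := fun i => (Finset.mul_sum _ _ _).symm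
  rw [Finset.sum_congr rfl fun i _ => step i, sum_pin]
  rw [reindex_perm τ (fun v => indQ ((σ (Fin.last m):ℕ) < (v:ℕ)))]
  exact sum_indQ_gt _

lemma EV4 (σ : Equiv.Perm (Fin (m+1))) :
    ∑ i : Fin (m+1), ∑ j : Fin (m+1), indQ (i = Fin.last m) * indQ (σ i = Fin.last m)
      = ((m:ℚ) + 1) * indQ (σ (Fin.last m) = Fin.last m) := by
  have step : ∀ i : Fin (m+1), ∑ j : Fin (m+1), indQ (i = Fin.last m) * indQ (σ i = Fin.last m)
      = indQ (i = Fin.last m) * (((m:ℚ)+1) * indQ (σ i = Fin.last m)) := by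
    intro i
    rw [Finset.sum_const, Finset.card_univ, Fintype.card_fin, nsmul_eq_mul]
    push_cast
    ring
  rw [Finset.sum_congr rfl fun i _ => step i, sum_pin]

lemma EV5 (σ : Equiv.Perm (Fin (m+1))) :
    ∑ i : Fin (m+1), ∑ j : Fin (m+1), indQ (i = Fin.last m) * indQ (σ j = Fin.last m) = 1 := by
  have inner : ∑ j : Fin (m+1), indQ (σ j = Fin.last m) = 1 := by
    simp only [show ∀ j : Fin (m+1), indQ (σ j = Fin.last m) = indQ (j = σ.symm (Fin.last m)) * 1 from fun j => by
      rw [mul_one, indQ_congr (Equiv.apply_eq_iff_eq_symm_apply σ)]]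
    exact sum_pin _ (fun _ => 1)
  have step : ∀ i : Fin (m+1), ∑ j : Fin (m+1), indQ (i = Fin.last m) * indQ (σ j = Fin.last m)
      = indQ (i = Fin.last m) * 1 := by
    intro i
    rw [← Finset.mul_sum, inner]
  rw [Finset.sum_congr rfl fun i _ => step i, sum_pin]

lemma EV6 (σ : Equiv.Perm (Fin (m+1))) :
    ∑ i : Fin (m+1), ∑ j : Fin (m+1), indQ (j = Fin.last m) * indQ ((σ i:ℕ) < (σ j:ℕ))
      = ((σ (Fin.last m):ℕ):ℚ) := by
  have step : ∀ i : Fin (m+1), ∑ j : Fin (m+1), indQ (j = Fin.last m) * indQ ((σ i:ℕ) < (σ j:ℕ))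
      = indQ ((σ i:ℕ) < ((σ (Fin.last m)):ℕ)) :=
    fun i => sum_pin _ (fun j => indQ ((σ i:ℕ) < (σ j:ℕ)))
  rw [Finset.sum_congr rfl fun i _ => step i]
  rw [reindex_perm σ (fun v => indQ ((v:ℕ) < ((σ (Fin.last m)):ℕ)))]
  exact sum_indQ_lt _

lemma EV7 (σ : Equiv.Perm (Fin (m+1))) :
    ∑ i : Fin (m+1), ∑ j : Fin (m+1), indQ (j = Fin.last m) * indQ (σ i = Fin.last m) = 1 := by
  have step : ∀ i : Fin (m+1), ∑ j : Fin (m+1), indQ (j = Fin.last m) * indQ (σ i = Fin.last m)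
      = indQ (σ i = Fin.last m) :=
    fun i => sum_pin (Fin.last m) (fun _ => indQ (σ i = Fin.last m))
  rw [Finset.sum_congr rfl fun i _ => step i]
  simp only [show ∀ i : Fin (m+1), indQ (σ i = Fin.last m) = indQ (i = σ.symm (Fin.last m)) * 1 from fun i => by
    rw [mul_one, indQ_congr (Equiv.apply_eq_iff_eq_symm_apply σ)]]
  exact sum_pin _ (fun _ => (1:ℚ))

lemma EV8 (σ : Equiv.Perm (Fin (m+1))) :
    ∑ i : Fin (m+1), ∑ j : Fin (m+1), indQ (j = Fin.last m) * indQ (σ j = Fin.last m)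
      = ((m:ℚ)+1) * indQ (σ (Fin.last m) = Fin.last m) := by
  have inner : ∑ j : Fin (m+1), indQ (j = Fin.last m) * indQ (σ j = Fin.last m)
      = indQ (σ (Fin.last m) = Fin.last m) :=
    sum_pin _ (fun j => indQ (σ j = Fin.last m))
  rw [Finset.sum_congr rfl fun i (_ : i ∈ Finset.univ) => inner]
  rw [Finset.sum_const, Finset.card_univ, Fintype.card_fin, nsmul_eq_mul]
  push_cast
  ring

lemma EV9 (σ : Equiv.Perm (Fin (m+1))) :
    ∑ i : Fin (m+1), ∑ j : Fin (m+1), indQ (i = Fin.last m) * indQ ((σ i:ℕ) < (σ j:ℕ))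
      = (m:ℚ) - ((σ (Fin.last m):ℕ):ℚ) := EV3 σ σ

lemma EV10 (σ : Equiv.Perm (Fin (m+1))) :
    ∑ i : Fin (m+1), ∑ j : Fin (m+1), indQ ((j:ℕ) ≤ (i:ℕ)) * indQ (σ i = Fin.last m)
      = ((σ.symm (Fin.last m):ℕ):ℚ) + 1 := by
  have step : ∀ i : Fin (m+1), ∑ j : Fin (m+1), indQ ((j:ℕ) ≤ (i:ℕ)) * indQ (σ i = Fin.last m)
      = indQ (i = σ.symm (Fin.last m)) * ∑ j : Fin (m+1), indQ ((j:ℕ) ≤ (i:ℕ)) := by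
    intro i
    rw [Finset.mul_sum]
    refine Finset.sum_congr rfl fun j _ => ?_
    rw [mul_comm, indQ_congr (Equiv.apply_eq_iff_eq_symm_apply σ)]
  rw [Finset.sum_congr rfl fun i _ => step i, sum_pin]
  exact sum_indQ_le _

lemma EV11 (σ τ : Equiv.Perm (Fin (m+1))) :
    ∑ i : Fin (m+1), ∑ j : Fin (m+1), indQ (i = Fin.last m) * indQ ((τ j:ℕ) ≤ (σ i:ℕ))
      = ((σ (Fin.last m):ℕ):ℚ) + 1 := by
  have step : ∀ i : Fin (m+1), ∑ j : Fin (m+1), indQ (i = Fin.last m) * indQ ((τ j:ℕ) ≤ (σ i:ℕ))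
      = indQ (i = Fin.last m) * ∑ j : Fin (m+1), indQ ((τ j:ℕ) ≤ (σ i:ℕ)) := fun i => (Finset.mul_sum _ _ _).symm
  rw [Finset.sum_congr rfl fun i _ => step i, sum_pin]
  rw [reindex_perm τ (fun v => indQ ((v:ℕ) ≤ ((σ (Fin.last m)):ℕ)))]
  exact sum_indQ_le _

end Counting
section Counting2

variable {m : ℕ}

lemma ptwC (t i p q : ℕ) (h1 : t ≠ i) (h2 : p ≠ q) :
    indQ (t < i) * indQ (q < p) - indQ (i < t) * indQ (p < q)
      = indQ (t < i) - indQ (p < q) := by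
  unfold indQ; split_ifs <;> (first | (exfalso; omega) | norm_num)

lemma ptwD (r i p q : ℕ) (h1 : r ≠ i) :
    indQ (i < r) * indQ (p < q) = indQ (p < q) - indQ (r < i) * indQ (p < q) := by
  unfold indQ; split_ifs <;> (first | (exfalso; omega) | norm_num)

lemma EV12 (σ τ : Equiv.Perm (Fin (m+1))) (h : ∀ i, σ i ≠ τ i) :
    ∑ i : Fin (m+1), ∑ j : Fin (m+1), indQ ((j:ℕ) ≤ (i:ℕ)) * indQ ((τ j:ℕ) ≤ (σ i:ℕ))
      = cnt2 τ σ + (∑ i : Fin (m+1), indQ ((τ.symm (σ i):ℕ) < (i:ℕ))) + cU τ σ := by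
  have hpt : ∀ i j : Fin (m+1), indQ ((j:ℕ) ≤ (i:ℕ)) * indQ ((τ j:ℕ) ≤ (σ i:ℕ))
      = indQ ((j:ℕ) < (i:ℕ)) * indQ ((τ j:ℕ) < (σ i:ℕ))
        + indQ (j = τ.symm (σ i)) * indQ ((j:ℕ) < (i:ℕ))
        + indQ (j = i) * indQ ((τ j:ℕ) < (σ i:ℕ)) := by
    intro i j
    have h1 : (j = τ.symm (σ i)) ↔ ((τ j:ℕ) = (σ i:ℕ)) := by
      rw [Equiv.eq_symm_apply, Fin.ext_iff]
    have h2 : (j = i) ↔ ((j:ℕ) = (i:ℕ)) := Fin.ext_iff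
    have h3 : ¬ ((τ j:ℕ) = (σ i:ℕ) ∧ (j:ℕ) = (i:ℕ)) := by
      rintro ⟨u1, u2⟩
      have hji : j = i := Fin.ext u2
      subst hji
      exact h j (Fin.ext u1).symm
    rw [indQ_congr h1, indQ_congr h2]
    unfold indQ
    split_ifs <;> (first | (exfalso; omega) | norm_num)
  rw [Finset.sum_congr rfl fun i _ => Finset.sum_congr rfl fun j _ => hpt i j]
  rw [sum2_add, sum2_add, cnt2_swap]
  congr 1
  · congr 1
    refine Finset.sum_congr rfl fun i _ => ?_
    exact sum_pin (τ.symm (σ i)) (fun j => indQ ((j:ℕ) < (i:ℕ)))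
  · refine Finset.sum_congr rfl fun i _ => ?_
    exact sum_pin i (fun j => indQ ((τ j:ℕ) < (σ i:ℕ)))

lemma EV12x (σ : Equiv.Perm (Fin (m+1))) :
    ∑ i : Fin (m+1), ∑ j : Fin (m+1), indQ ((j:ℕ) ≤ (i:ℕ)) * indQ ((σ j:ℕ) ≤ (σ i:ℕ))
      = cnt2 σ σ + ((m:ℚ) + 1) := by
  have hpt : ∀ i j : Fin (m+1), indQ ((j:ℕ) ≤ (i:ℕ)) * indQ ((σ j:ℕ) ≤ (σ i:ℕ))
      = indQ ((j:ℕ) < (i:ℕ)) * indQ ((σ j:ℕ) < (σ i:ℕ)) + indQ (j = i) * 1 := by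
    intro i j
    have hinj : ((σ j:ℕ) = (σ i:ℕ)) ↔ ((j:ℕ) = (i:ℕ)) := by
      rw [← Fin.ext_iff, ← Fin.ext_iff, Equiv.apply_eq_iff_eq]
    rw [indQ_congr (Fin.ext_iff : (j = i) ↔ _)]
    unfold indQ
    split_ifs <;> (first | (exfalso; omega) | norm_num)
  rw [Finset.sum_congr rfl fun i _ => Finset.sum_congr rfl fun j _ => hpt i j]
  rw [sum2_add, cnt2_swap]
  congr 1
  rw [Finset.sum_congr rfl fun i (_ : i ∈ Finset.univ) => sum_pin i (fun _ => (1:ℚ))]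
  exact sum_one_fin

lemma TE1 (σ : Equiv.Perm (Fin (m+1))) :
    ∑ i : Fin (m+1), ∑ j : Fin (m+1),
      indQ (((i+1 : Fin (m+1)):ℕ) < ((j+1 : Fin (m+1)):ℕ)) *
        indQ (((σ i+1 : Fin (m+1)):ℕ) < ((σ j+1 : Fin (m+1)):ℕ))
      = cnt2 σ σ + 2*(m:ℚ) - 2*((σ.symm (Fin.last m):ℕ):ℚ) - 2*((σ (Fin.last m):ℕ):ℚ)
        - 2 + (2*((m:ℚ)+1)) * indQ (σ (Fin.last m) = Fin.last m) := by
  have hpt : ∀ i j : Fin (m+1),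
      indQ (((i+1 : Fin (m+1)):ℕ) < ((j+1 : Fin (m+1)):ℕ)) *
        indQ (((σ i+1 : Fin (m+1)):ℕ) < ((σ j+1 : Fin (m+1)):ℕ))
      = indQ ((i:ℕ) < (j:ℕ)) * indQ ((σ i:ℕ) < (σ j:ℕ))
        + indQ ((i:ℕ) < (j:ℕ)) * indQ (σ i = Fin.last m)
        + indQ (i = Fin.last m) * indQ ((σ i:ℕ) < (σ j:ℕ))
        + indQ (i = Fin.last m) * indQ (σ i = Fin.last m)
        + indQ (j = Fin.last m) * indQ (σ j = Fin.last m)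
        - indQ ((i:ℕ) < (j:ℕ)) * indQ (σ j = Fin.last m)
        - indQ (i = Fin.last m) * indQ (σ j = Fin.last m)
        - indQ (j = Fin.last m) * indQ ((σ i:ℕ) < (σ j:ℕ))
        - indQ (j = Fin.last m) * indQ (σ i = Fin.last m) := by
    intro i j
    rw [key_lt_lt, key_lt_lt]
    ring
  rw [Finset.sum_congr rfl fun i _ => Finset.sum_congr rfl fun j _ => hpt i j]
  rw [sum2_sub, sum2_sub, sum2_sub, sum2_sub, sum2_add, sum2_add, sum2_add, sum2_add]
  rw [EV1 σ, EV2 σ, EV3 σ σ, EV4 σ, EV5 σ, EV6 σ, EV7 σ, EV8 σ]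
  have e0 : ∑ i : Fin (m+1), ∑ j : Fin (m+1),
      indQ ((i:ℕ) < (j:ℕ)) * indQ ((σ i:ℕ) < (σ j:ℕ)) = cnt2 σ σ := rfl
  rw [e0]
  ring

lemma TE2 (a b : Equiv.Perm (Fin (m+1))) :
    ∑ i : Fin (m+1), ∑ j : Fin (m+1),
      indQ (((i+1 : Fin (m+1)):ℕ) ≤ (j:ℕ)) * indQ (((a i+1 : Fin (m+1)):ℕ) ≤ ((b j):ℕ))
      = cnt2 a b + ((m:ℚ) - ((a.symm (Fin.last m):ℕ):ℚ)) + ((m:ℚ) - ((a (Fin.last m):ℕ):ℚ))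
        + ((m:ℚ)+1) * indQ (a (Fin.last m) = Fin.last m) := by
  have hpt : ∀ i j : Fin (m+1),
      indQ (((i+1 : Fin (m+1)):ℕ) ≤ (j:ℕ)) * indQ (((a i+1 : Fin (m+1)):ℕ) ≤ ((b j):ℕ))
      = indQ ((i:ℕ) < (j:ℕ)) * indQ ((a i:ℕ) < (b j:ℕ))
        + indQ ((i:ℕ) < (j:ℕ)) * indQ (a i = Fin.last m)
        + indQ (i = Fin.last m) * indQ ((a i:ℕ) < (b j:ℕ))
        + indQ (i = Fin.last m) * indQ (a i = Fin.last m) := by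
    intro i j
    rw [key_succ_le i (j:ℕ) (Nat.lt_succ_iff.mp j.isLt),
        key_succ_le (a i) ((b j):ℕ) (Nat.lt_succ_iff.mp (b j).isLt)]
    ring
  rw [Finset.sum_congr rfl fun i _ => Finset.sum_congr rfl fun j _ => hpt i j]
  rw [sum2_add, sum2_add, sum2_add]
  rw [EV1 a, EV3 a b, EV4 a]
  have e0 : ∑ i : Fin (m+1), ∑ j : Fin (m+1),
      indQ ((i:ℕ) < (j:ℕ)) * indQ ((a i:ℕ) < (b j:ℕ)) = cnt2 a b := rfl
  rw [e0]
  try ring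

lemma TE3 (a b : Equiv.Perm (Fin (m+1))) (h : ∀ i, a i ≠ b i) :
    ∑ i : Fin (m+1), ∑ j : Fin (m+1),
      indQ ((j:ℕ) < ((i+1 : Fin (m+1)):ℕ)) * indQ (((b j):ℕ) < ((a i+1 : Fin (m+1)):ℕ))
      = cnt2 b a + (∑ i : Fin (m+1), indQ ((b.symm (a i):ℕ) < (i:ℕ))) + cU b a
        - (((a.symm (Fin.last m):ℕ):ℚ) + 1) - (((a (Fin.last m):ℕ):ℚ) + 1)
        + ((m:ℚ)+1) * indQ (a (Fin.last m) = Fin.last m) := by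
  have hpt : ∀ i j : Fin (m+1),
      indQ ((j:ℕ) < ((i+1 : Fin (m+1)):ℕ)) * indQ (((b j):ℕ) < ((a i+1 : Fin (m+1)):ℕ))
      = indQ ((j:ℕ) ≤ (i:ℕ)) * indQ ((b j:ℕ) ≤ (a i:ℕ))
        + indQ (i = Fin.last m) * indQ (a i = Fin.last m)
        - indQ ((j:ℕ) ≤ (i:ℕ)) * indQ (a i = Fin.last m)
        - indQ (i = Fin.last m) * indQ ((b j:ℕ) ≤ (a i:ℕ)) := by
    intro i j
    rw [key_lt_succ i (j:ℕ) (Nat.lt_succ_iff.mp j.isLt),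
        key_lt_succ (a i) ((b j):ℕ) (Nat.lt_succ_iff.mp (b j).isLt)]
    ring
  rw [Finset.sum_congr rfl fun i _ => Finset.sum_congr rfl fun j _ => hpt i j]
  rw [sum2_sub, sum2_sub, sum2_add]
  rw [EV12 a b h, EV10 a, EV11 a b, EV4 a]
  ring

lemma TE3x (σ : Equiv.Perm (Fin (m+1))) :
    ∑ i : Fin (m+1), ∑ j : Fin (m+1),
      indQ ((j:ℕ) < ((i+1 : Fin (m+1)):ℕ)) * indQ (((σ j):ℕ) < ((σ i+1 : Fin (m+1)):ℕ))
      = cnt2 σ σ + ((m:ℚ)+1)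
        - (((σ.symm (Fin.last m):ℕ):ℚ) + 1) - (((σ (Fin.last m):ℕ):ℚ) + 1)
        + ((m:ℚ)+1) * indQ (σ (Fin.last m) = Fin.last m) := by
  have hpt : ∀ i j : Fin (m+1),
      indQ ((j:ℕ) < ((i+1 : Fin (m+1)):ℕ)) * indQ (((σ j):ℕ) < ((σ i+1 : Fin (m+1)):ℕ))
      = indQ ((j:ℕ) ≤ (i:ℕ)) * indQ ((σ j:ℕ) ≤ (σ i:ℕ))
        + indQ (i = Fin.last m) * indQ (σ i = Fin.last m)
        - indQ ((j:ℕ) ≤ (i:ℕ)) * indQ (σ i = Fin.last m)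
        - indQ (i = Fin.last m) * indQ ((σ j:ℕ) ≤ (σ i:ℕ)) := by
    intro i j
    rw [key_lt_succ i (j:ℕ) (Nat.lt_succ_iff.mp j.isLt),
        key_lt_succ (σ i) ((σ j):ℕ) (Nat.lt_succ_iff.mp (σ j).isLt)]
    ring
  rw [Finset.sum_congr rfl fun i _ => Finset.sum_congr rfl fun j _ => hpt i j]
  rw [sum2_sub, sum2_sub, sum2_add]
  rw [EV12x σ, EV10 σ, EV11 σ σ, EV4 σ]
  ring

lemma CUfull (a b : Equiv.Perm (Fin (m+1))) (h : ∀ i, a i ≠ b i) :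
    cU a b + cU b a = (m:ℚ) + 1 := by
  unfold cU
  rw [← Finset.sum_add_distrib]
  rw [Finset.sum_congr rfl fun i _ => (show indQ ((a i:ℕ) < (b i:ℕ)) + indQ ((b i:ℕ) < (a i:ℕ)) = 1 by
    have hne : (a i:ℕ) ≠ (b i:ℕ) := fun hh => h i (Fin.ext hh)
    unfold indQ; split_ifs <;> (first | (exfalso; omega) | norm_num))]
  exact sum_one_fin

lemma sum_tau_split (a b : Equiv.Perm (Fin (m+1))) (h : ∀ i, a i ≠ b i) :
    (∑ i : Fin (m+1), indQ ((i:ℕ) < (b.symm (a i):ℕ)))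
      + (∑ i : Fin (m+1), indQ ((b.symm (a i):ℕ) < (i:ℕ))) = (m:ℚ) + 1 := by
  rw [← Finset.sum_add_distrib]
  rw [Finset.sum_congr rfl fun (i : Fin (m+1)) _ => (show indQ ((i:ℕ) < (b.symm (a i):ℕ))
      + indQ ((b.symm (a i):ℕ) < (i:ℕ)) = 1 by
    have hne : (b.symm (a i):ℕ) ≠ (i:ℕ) := fun hh => h i (by
      have h2 : b.symm (a i) = i := Fin.ext hh
      exact (Equiv.symm_apply_eq b).mp h2)
    unfold indQ; split_ifs <;> (first | (exfalso; omega) | norm_num))]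
  exact sum_one_fin

lemma sum_rho_eq (a b : Equiv.Perm (Fin (m+1))) :
    ∑ i : Fin (m+1), indQ ((a.symm (b i):ℕ) < (i:ℕ))
      = ∑ i : Fin (m+1), indQ ((i:ℕ) < (b.symm (a i):ℕ)) := by
  have h := reindex_perm (a.trans b.symm) (fun i => indQ ((a.symm (b i):ℕ) < (i:ℕ)))
  simp only [Equiv.trans_apply, Equiv.apply_symm_apply, Equiv.symm_apply_apply] at h
  exact h.symm

lemma cNE_sub_cSW (a b : Equiv.Perm (Fin (m+1))) (h : ∀ i, a i ≠ b i) :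
    cNE a b - cSW a b = (∑ i : Fin (m+1), indQ ((b.symm (a i):ℕ) < (i:ℕ))) - cU a b := by
  unfold cNE cSW cU
  rw [← Finset.sum_sub_distrib, ← Finset.sum_sub_distrib]
  refine Finset.sum_congr rfl fun i _ => ?_
  refine ptwC _ _ _ _ ?_ ?_
  · exact fun hh => h i ((Equiv.symm_apply_eq b).mp (Fin.ext hh))
  · exact fun hh => h i (Fin.ext hh)

lemma NE_balance (a b : Equiv.Perm (Fin (m+1))) (h : ∀ i, a i ≠ b i) :
    cNE a b + cNE b a = cSW a b + cSW b a := by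
  have h' : ∀ i, b i ≠ a i := fun i hh => h i hh.symm
  have e1 := cNE_sub_cSW a b h
  have e2 := cNE_sub_cSW b a h'
  have e3 := sum_rho_eq a b
  have e4 := sum_tau_split a b h
  have e5 := CUfull a b h
  linarith

lemma relCLT (a b : Equiv.Perm (Fin (m+1))) (h : ∀ i, a i ≠ b i) :
    ∑ i : Fin (m+1), indQ ((b.symm (a i):ℕ) < (i:ℕ)) = cNE a b + cU a b - cSW a b := by
  linarith [cNE_sub_cSW a b h]

lemma relC4 (a b : Equiv.Perm (Fin (m+1))) (h : ∀ i, a i ≠ b i) :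
    ∑ i : Fin (m+1), indQ ((i:ℕ) < (a.symm (b i):ℕ)) * indQ ((a i:ℕ) < (b i:ℕ))
      = cU a b - cNE b a := by
  unfold cNE cU
  rw [← Finset.sum_sub_distrib]
  refine Finset.sum_congr rfl fun i _ => ?_
  refine ptwD _ _ _ _ ?_
  exact fun hh => h i ((Equiv.symm_apply_eq a).mp (Fin.ext hh)).symm

lemma relC5 (a b : Equiv.Perm (Fin (m+1))) (h : ∀ i, a i ≠ b i) :
    ∑ i : Fin (m+1), indQ ((i:ℕ) < (b.symm (a i):ℕ)) * indQ ((b i:ℕ) < (a i:ℕ))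
      = cU b a - cNE a b := by
  unfold cNE cU
  rw [← Finset.sum_sub_distrib]
  refine Finset.sum_congr rfl fun i _ => ?_
  refine ptwD _ _ _ _ ?_
  exact fun hh => h i ((Equiv.symm_apply_eq b).mp (Fin.ext hh))

end Counting2
section Translate

lemma rlt_ii (p q : ℕ) : ((p:ℝ) < (q:ℝ)) ↔ p < q := Nat.cast_lt

lemma rlt_ih (p q : ℕ) : ((p:ℝ) < (q:ℝ) + 1/2) ↔ p ≤ q := by
  constructor
  · intro h
    by_contra hc
    push_neg at hc
    have h2 : ((q:ℝ)) + 1 ≤ (p:ℝ) := by exact_mod_cast hc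
    linarith
  · intro h
    have h2 : (p:ℝ) ≤ (q:ℝ) := by exact_mod_cast h
    linarith

lemma rlt_hi (p q : ℕ) : ((p:ℝ) + 1/2 < (q:ℝ)) ↔ p < q := by
  constructor
  · intro h
    by_contra hc
    push_neg at hc
    have h2 : ((q:ℝ)) ≤ (p:ℝ) := by exact_mod_cast hc
    linarith
  · intro h
    have h2 : (p:ℝ) + 1 ≤ (q:ℝ) := by exact_mod_cast h
    linarith

lemma rlt_hh (p q : ℕ) : ((p:ℝ) + 1/2 < (q:ℝ) + 1/2) ↔ p < q := by
  constructor
  · intro h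
    exact_mod_cast (by linarith : (p:ℝ) < (q:ℝ))
  · intro h
    have h2 : (p:ℝ) < (q:ℝ) := by exact_mod_cast h
    linarith

lemma if_one_eq_indQ (A B : Prop) [Decidable A] [Decidable B] (h : A ↔ B) :
    (if A then (1:ℚ)*1 else 0) = indQ B := by
  unfold indQ; simp [h]

variable {n : ℕ}

namespace Grid

/-- Points at half-integer coordinates for a marker family. -/
def hpts (c : Fin n → Fin n) : PtComb :=
  ∑ i : Fin n, Finsupp.single (((i:ℕ):ℝ) + 1/2, ((c i:ℕ):ℝ) + 1/2) 1

lemma XX_eq_hpts (G : Grid n) : G.XX = hpts (fun i => G.σX i) := rfl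

lemma OO_eq_hpts (G : Grid n) : G.OO = hpts (fun i => G.σO i) := rfl

lemma Ifun_pts_pts (x y : Equiv.Perm (Fin n)) :
    Ifun (pts x) (pts y)
      = ∑ i : Fin n, ∑ j : Fin n, indQ ((i:ℕ) < (j:ℕ)) * indQ ((x i:ℕ) < (y j:ℕ)) := by
  rw [pts, Ifun_sum_left]
  refine Finset.sum_congr rfl fun i _ => ?_
  rw [pts, Ifun_sum_right]
  refine Finset.sum_congr rfl fun j _ => ?_
  rw [Ifun_single_single, ← indQ_and]
  exact if_one_eq_indQ _ _ (by
    constructor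
    · rintro ⟨h1, h2⟩
      exact ⟨(rlt_ii _ _).mp h1, (rlt_ii _ _).mp h2⟩
    · rintro ⟨h1, h2⟩
      exact ⟨(rlt_ii _ _).mpr h1, (rlt_ii _ _).mpr h2⟩)

lemma Ifun_pts_hpts (x : Equiv.Perm (Fin n)) (c : Fin n → Fin n) :
    Ifun (pts x) (hpts c)
      = ∑ i : Fin n, ∑ j : Fin n, indQ ((i:ℕ) ≤ (j:ℕ)) * indQ ((x i:ℕ) ≤ (c j:ℕ)) := by
  rw [pts, Ifun_sum_left]
  refine Finset.sum_congr rfl fun i _ => ?_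
  rw [hpts, Ifun_sum_right]
  refine Finset.sum_congr rfl fun j _ => ?_
  rw [Ifun_single_single, ← indQ_and]
  exact if_one_eq_indQ _ _ (by
    constructor
    · rintro ⟨h1, h2⟩
      exact ⟨(rlt_ih _ _).mp h1, (rlt_ih _ _).mp h2⟩
    · rintro ⟨h1, h2⟩
      exact ⟨(rlt_ih _ _).mpr h1, (rlt_ih _ _).mpr h2⟩)

lemma Ifun_hpts_pts (c : Fin n → Fin n) (x : Equiv.Perm (Fin n)) :
    Ifun (hpts c) (pts x)
      = ∑ i : Fin n, ∑ j : Fin n, indQ ((i:ℕ) < (j:ℕ)) * indQ ((c i:ℕ) < (x j:ℕ)) := by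
  rw [hpts, Ifun_sum_left]
  refine Finset.sum_congr rfl fun i _ => ?_
  rw [pts, Ifun_sum_right]
  refine Finset.sum_congr rfl fun j _ => ?_
  rw [Ifun_single_single, ← indQ_and]
  exact if_one_eq_indQ _ _ (by
    constructor
    · rintro ⟨h1, h2⟩
      exact ⟨(rlt_hi _ _).mp h1, (rlt_hi _ _).mp h2⟩
    · rintro ⟨h1, h2⟩
      exact ⟨(rlt_hi _ _).mpr h1, (rlt_hi _ _).mpr h2⟩)

lemma Ifun_hpts_hpts (c d : Fin n → Fin n) :
    Ifun (hpts c) (hpts d)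
      = ∑ i : Fin n, ∑ j : Fin n, indQ ((i:ℕ) < (j:ℕ)) * indQ ((c i:ℕ) < (d j:ℕ)) := by
  rw [hpts, Ifun_sum_left]
  refine Finset.sum_congr rfl fun i _ => ?_
  rw [hpts, Ifun_sum_right]
  refine Finset.sum_congr rfl fun j _ => ?_
  rw [Ifun_single_single, ← indQ_and]
  exact if_one_eq_indQ _ _ (by
    constructor
    · rintro ⟨h1, h2⟩
      exact ⟨(rlt_hh _ _).mp h1, (rlt_hh _ _).mp h2⟩
    · rintro ⟨h1, h2⟩
      exact ⟨(rlt_hh _ _).mpr h1, (rlt_hh _ _).mpr h2⟩)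

lemma M_decomp (G : Grid n) (x : Equiv.Perm (Fin n)) :
    G.M x = (∑ i : Fin n, ∑ j : Fin n, indQ ((i:ℕ) < (j:ℕ)) * indQ ((x i:ℕ) < (x j:ℕ)))
      - (∑ i : Fin n, ∑ j : Fin n, indQ ((i:ℕ) ≤ (j:ℕ)) * indQ ((x i:ℕ) ≤ (G.σO j:ℕ)))
      - (∑ i : Fin n, ∑ j : Fin n, indQ ((i:ℕ) < (j:ℕ)) * indQ ((G.σO i:ℕ) < (x j:ℕ)))
      + (∑ i : Fin n, ∑ j : Fin n, indQ ((i:ℕ) < (j:ℕ)) * indQ ((G.σO i:ℕ) < (G.σO j:ℕ)))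
      + 1 := by
  rw [Grid.M, Jfun_self, G.OO_eq_hpts, Ifun_sub_left, Ifun_sub_right, Ifun_sub_right,
      Ifun_pts_pts, Ifun_pts_hpts, Ifun_hpts_pts, Ifun_hpts_hpts]
  ring

lemma MX_decomp (G : Grid n) (x : Equiv.Perm (Fin n)) :
    G.MX x = (∑ i : Fin n, ∑ j : Fin n, indQ ((i:ℕ) < (j:ℕ)) * indQ ((x i:ℕ) < (x j:ℕ)))
      - (∑ i : Fin n, ∑ j : Fin n, indQ ((i:ℕ) ≤ (j:ℕ)) * indQ ((x i:ℕ) ≤ (G.σX j:ℕ)))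
      - (∑ i : Fin n, ∑ j : Fin n, indQ ((i:ℕ) < (j:ℕ)) * indQ ((G.σX i:ℕ) < (x j:ℕ)))
      + (∑ i : Fin n, ∑ j : Fin n, indQ ((i:ℕ) < (j:ℕ)) * indQ ((G.σX i:ℕ) < (G.σX j:ℕ)))
      + 1 := by
  rw [Grid.MX, Jfun_self, G.XX_eq_hpts, Ifun_sub_left, Ifun_sub_right, Ifun_sub_right,
      Ifun_pts_pts, Ifun_pts_hpts, Ifun_hpts_pts, Ifun_hpts_hpts]
  ring

lemma A_identity (G : Grid n) (x : Equiv.Perm (Fin n)) :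
    G.A x = (G.M x - G.MX x) / 2 - ((n:ℚ) - 1) / 2 := by
  rw [Grid.A, Grid.M, Grid.MX, Jfun, Jfun, Jfun]
  simp only [Ifun_sub_left, Ifun_sub_right, Ifun_add_left, Ifun_add_right,
    Ifun_smul_left, Ifun_smul_right]
  ring

end Grid

end Translate
section Writhe

variable {m : ℕ}

def Vterm (a b : Equiv.Perm (Fin (m+1))) (i j : Fin (m+1)) : ℚ :=
  indQ ((a i:ℕ) < (j:ℕ) ∧ (j:ℕ) < (b i:ℕ)) - indQ ((b i:ℕ) < (j:ℕ) ∧ (j:ℕ) < (a i:ℕ))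

namespace Grid

lemma cross_ptw (G : Grid (m+1)) (i j : Fin (m+1)) :
    (if G.Crossing i j then ((G.crossSign i j : ℤ):ℚ) else 0)
      = Vterm G.σX G.σO i j * indQ ((i:ℕ) < (G.σO.symm j:ℕ))
        - Vterm G.σX G.σO i j * indQ ((i:ℕ) < (G.σX.symm j:ℕ)) := by
  have hab : (G.σX i:ℕ) ≠ (G.σO i:ℕ) := fun hh => G.disj i (Fin.ext hh)
  have hXj : ((G.σX.symm j:ℕ) = (i:ℕ)) ↔ ((j:ℕ) = (G.σX i:ℕ)) := by
    rw [← Fin.ext_iff, ← Fin.ext_iff, Equiv.symm_apply_eq]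
  have hOj : ((G.σO.symm j:ℕ) = (i:ℕ)) ↔ ((j:ℕ) = (G.σO i:ℕ)) := by
    rw [← Fin.ext_iff, ← Fin.ext_iff, Equiv.symm_apply_eq]
  unfold Grid.Crossing Grid.crossSign Vterm indQ
  simp only [min_lt_iff, lt_max_iff, Fin.lt_def]
  split_ifs <;> (first | (exfalso; omega) | norm_num)

lemma writhe_eval (G : Grid (m+1)) :
    ((G.writhe : ℤ) : ℚ)
      = -(cnt2 G.σX G.σX) - cnt2 G.σO G.σO + cnt2 G.σX G.σO + cnt2 G.σO G.σX
        + ((m:ℚ)+1) - cNE G.σO G.σX - cNE G.σX G.σO := by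
  have hab : ∀ i, G.σX i ≠ G.σO i := G.disj
  have h1 : ((G.writhe : ℤ) : ℚ) = ∑ i : Fin (m+1), ∑ j : Fin (m+1),
      (Vterm G.σX G.σO i j * indQ ((i:ℕ) < (G.σO.symm j:ℕ))
        - Vterm G.σX G.σO i j * indQ ((i:ℕ) < (G.σX.symm j:ℕ))) := by
    rw [Grid.writhe, Int.cast_sum, Fintype.sum_prod_type]
    refine Finset.sum_congr rfl fun i _ => Finset.sum_congr rfl fun j _ => ?_
    rw [← G.cross_ptw i j]
    split_ifs <;> simp
  rw [h1, sum2_sub]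
  have h2 : ∑ i : Fin (m+1), ∑ j : Fin (m+1),
      Vterm G.σX G.σO i j * indQ ((i:ℕ) < (G.σX.symm j:ℕ))
      = ∑ i : Fin (m+1), ∑ k : Fin (m+1),
          Vterm G.σX G.σO i (G.σX k) * indQ ((i:ℕ) < (k:ℕ)) := by
    refine Finset.sum_congr rfl fun i _ => ?_
    have h := reindex_perm G.σX (fun j => Vterm G.σX G.σO i j * indQ ((i:ℕ) < (G.σX.symm j:ℕ)))
    simp only [Equiv.symm_apply_apply] at h
    exact h.symm
  have h3 : ∑ i : Fin (m+1), ∑ j : Fin (m+1),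
      Vterm G.σX G.σO i j * indQ ((i:ℕ) < (G.σO.symm j:ℕ))
      = ∑ i : Fin (m+1), ∑ k : Fin (m+1),
          Vterm G.σX G.σO i (G.σO k) * indQ ((i:ℕ) < (k:ℕ)) := by
    refine Finset.sum_congr rfl fun i _ => ?_
    have h := reindex_perm G.σO (fun j => Vterm G.σX G.σO i j * indQ ((i:ℕ) < (G.σO.symm j:ℕ)))
    simp only [Equiv.symm_apply_apply] at h
    exact h.symm
  rw [h2, h3]
  have h4 : ∑ i : Fin (m+1), ∑ k : Fin (m+1),
      Vterm G.σX G.σO i (G.σX k) * indQ ((i:ℕ) < (k:ℕ))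
      = cnt2 G.σX G.σX - cnt2 G.σO G.σX - (cU G.σX G.σO - cNE G.σO G.σX) := by
    have hpt : ∀ i k : Fin (m+1), Vterm G.σX G.σO i (G.σX k) * indQ ((i:ℕ) < (k:ℕ))
        = indQ ((i:ℕ) < (k:ℕ)) * indQ ((G.σX i:ℕ) < (G.σX k:ℕ))
          - indQ ((i:ℕ) < (k:ℕ)) * indQ ((G.σO i:ℕ) < (G.σX k:ℕ))
          - indQ (k = G.σX.symm (G.σO i)) *
              (indQ ((i:ℕ) < (k:ℕ)) * indQ ((G.σX i:ℕ) < (G.σO i:ℕ))) := by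
      intro i k
      have hk : (k = G.σX.symm (G.σO i)) ↔ ((G.σX k:ℕ) = (G.σO i:ℕ)) := by
        rw [Equiv.eq_symm_apply, Fin.ext_iff]
      have hik : ((G.σX k:ℕ) = (G.σX i:ℕ)) ↔ ((k:ℕ) = (i:ℕ)) := by
        rw [← Fin.ext_iff, ← Fin.ext_iff, Equiv.apply_eq_iff_eq]
      have hab' : (G.σX i:ℕ) ≠ (G.σO i:ℕ) := fun hh => hab i (Fin.ext hh)
      rw [indQ_congr hk]
      unfold Vterm indQ
      split_ifs <;> (first | (exfalso; omega) | norm_num)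
    rw [Finset.sum_congr rfl fun i _ => Finset.sum_congr rfl fun k _ => hpt i k]
    rw [sum2_sub, sum2_sub]
    have e1 : (∑ i : Fin (m+1), ∑ k : Fin (m+1), indQ (k = G.σX.symm (G.σO i)) *
        (indQ ((i:ℕ) < (k:ℕ)) * indQ ((G.σX i:ℕ) < (G.σO i:ℕ))))
        = cU G.σX G.σO - cNE G.σO G.σX := by
      rw [Finset.sum_congr rfl fun i (_ : i ∈ Finset.univ) => sum_pin (G.σX.symm (G.σO i))
        (fun k => indQ ((i:ℕ) < (k:ℕ)) * indQ ((G.σX i:ℕ) < (G.σO i:ℕ)))]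
      exact relC4 G.σX G.σO hab
    rw [e1]
    have e2 : ∑ i : Fin (m+1), ∑ k : Fin (m+1),
        indQ ((i:ℕ) < (k:ℕ)) * indQ ((G.σX i:ℕ) < (G.σX k:ℕ)) = cnt2 G.σX G.σX := rfl
    have e3 : ∑ i : Fin (m+1), ∑ k : Fin (m+1),
        indQ ((i:ℕ) < (k:ℕ)) * indQ ((G.σO i:ℕ) < (G.σX k:ℕ)) = cnt2 G.σO G.σX := rfl
    rw [e2, e3]
  have h5 : ∑ i : Fin (m+1), ∑ k : Fin (m+1),
      Vterm G.σX G.σO i (G.σO k) * indQ ((i:ℕ) < (k:ℕ))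
      = cnt2 G.σX G.σO - cnt2 G.σO G.σO + (cU G.σO G.σX - cNE G.σX G.σO) := by
    have hpt : ∀ i k : Fin (m+1), Vterm G.σX G.σO i (G.σO k) * indQ ((i:ℕ) < (k:ℕ))
        = indQ ((i:ℕ) < (k:ℕ)) * indQ ((G.σX i:ℕ) < (G.σO k:ℕ))
          - indQ ((i:ℕ) < (k:ℕ)) * indQ ((G.σO i:ℕ) < (G.σO k:ℕ))
          + indQ (k = G.σO.symm (G.σX i)) *
              (indQ ((i:ℕ) < (k:ℕ)) * indQ ((G.σO i:ℕ) < (G.σX i:ℕ))) := by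
      intro i k
      have hk : (k = G.σO.symm (G.σX i)) ↔ ((G.σO k:ℕ) = (G.σX i:ℕ)) := by
        rw [Equiv.eq_symm_apply, Fin.ext_iff]
      have hik : ((G.σO k:ℕ) = (G.σO i:ℕ)) ↔ ((k:ℕ) = (i:ℕ)) := by
        rw [← Fin.ext_iff, ← Fin.ext_iff, Equiv.apply_eq_iff_eq]
      have hab' : (G.σX i:ℕ) ≠ (G.σO i:ℕ) := fun hh => hab i (Fin.ext hh)
      rw [indQ_congr hk]
      unfold Vterm indQ
      split_ifs <;> (first | (exfalso; omega) | norm_num)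
    rw [Finset.sum_congr rfl fun i _ => Finset.sum_congr rfl fun k _ => hpt i k]
    rw [sum2_add, sum2_sub]
    have e1 : (∑ i : Fin (m+1), ∑ k : Fin (m+1), indQ (k = G.σO.symm (G.σX i)) *
        (indQ ((i:ℕ) < (k:ℕ)) * indQ ((G.σO i:ℕ) < (G.σX i:ℕ))))
        = cU G.σO G.σX - cNE G.σX G.σO := by
      rw [Finset.sum_congr rfl fun i (_ : i ∈ Finset.univ) => sum_pin (G.σO.symm (G.σX i))
        (fun k => indQ ((i:ℕ) < (k:ℕ)) * indQ ((G.σO i:ℕ) < (G.σX i:ℕ)))]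
      exact relC5 G.σX G.σO hab
    rw [e1]
    have e2 : ∑ i : Fin (m+1), ∑ k : Fin (m+1),
        indQ ((i:ℕ) < (k:ℕ)) * indQ ((G.σX i:ℕ) < (G.σO k:ℕ)) = cnt2 G.σX G.σO := rfl
    have e3 : ∑ i : Fin (m+1), ∑ k : Fin (m+1),
        indQ ((i:ℕ) < (k:ℕ)) * indQ ((G.σO i:ℕ) < (G.σO k:ℕ)) = cnt2 G.σO G.σO := rfl
    rw [e2, e3]
  rw [h4, h5]
  have hCU := CUfull G.σX G.σO hab
  linarith

lemma card_filter_q (p : Fin (m+1) → Prop) [DecidablePred p] :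
    ((Finset.univ.filter p).card : ℚ) = ∑ i : Fin (m+1), indQ (p i) := by
  unfold indQ
  rw [Finset.sum_boole]

lemma down_eval (G : Grid (m+1)) :
    ((G.downCusps : ℕ) : ℚ) = cNE G.σX G.σO + cSW G.σO G.σX := by
  rw [Grid.downCusps]
  push_cast
  rw [card_filter_q, card_filter_q]
  congr 1
  · unfold cNE
    refine Finset.sum_congr rfl fun i _ => ?_
    rw [← indQ_and]
    exact indQ_congr (and_congr Fin.lt_def Fin.lt_def)
  · unfold cSW
    refine Finset.sum_congr rfl fun i _ => ?_
    rw [← indQ_and]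
    exact indQ_congr (and_congr Fin.lt_def Fin.lt_def)

lemma up_eval (G : Grid (m+1)) :
    ((G.upCusps : ℕ) : ℚ) = cNE G.σO G.σX + cSW G.σX G.σO := by
  rw [Grid.upCusps]
  push_cast
  rw [card_filter_q, card_filter_q]
  congr 1
  · unfold cNE
    refine Finset.sum_congr rfl fun i _ => ?_
    rw [← indQ_and]
    exact indQ_congr (and_congr Fin.lt_def Fin.lt_def)
  · unfold cSW
    refine Finset.sum_congr rfl fun i _ => ?_
    rw [← indQ_and]
    exact indQ_congr (and_congr Fin.lt_def Fin.lt_def)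

end Grid

end Writhe


/-- For a toroidal grid diagram `G` of size `n` representing a knot,
the canonical generator `x^UR` satisfies `M(x^UR) = tb − r + 1` and
`A(x^UR) = (tb − r + 1)/2`, where `tb` and `r` are the Thurston–Bennequin invariant
and rotation number of the associated oriented Legendrian knot. -/
theorem gradings_xUR {n : ℕ} [NeZero n] (hn : 2 ≤ n) (G : Grid n) (hK : G.RepKnot) :
    G.M G.xUR = G.tb - G.rot + 1 ∧ G.A G.xUR = (G.tb - G.rot + 1) / 2 := by
  obtain ⟨m, rfl⟩ : ∃ m, n = m + 1 := ⟨n - 1, by omega⟩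
  have hab : ∀ i, G.σX i ≠ G.σO i := G.disj
  have hx : ∀ i : Fin (m+1), G.xUR (i+1) = G.σX i + 1 := by
    intro i
    show G.σX ((i+1) - 1) + 1 = G.σX i + 1
    rw [add_sub_cancel_right]
  have hright : ∀ (F : Fin (m+1) → Fin (m+1) → ℚ),
      (∑ i : Fin (m+1), ∑ j : Fin (m+1), F i j)
        = ∑ i : Fin (m+1), ∑ j : Fin (m+1), F i (j+1) :=
    fun F => Finset.sum_congr rfl fun i _ => (reindex_add_one (F i)).symm
  have hS1 : (∑ i : Fin (m+1), ∑ j : Fin (m+1),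
        indQ ((i:ℕ) < (j:ℕ)) * indQ ((G.xUR i:ℕ) < (G.xUR j:ℕ)))
      = cnt2 G.σX G.σX + 2*(m:ℚ) - 2*((G.σX.symm (Fin.last m):ℕ):ℚ)
        - 2*((G.σX (Fin.last m):ℕ):ℚ) - 2
        + (2*((m:ℚ)+1)) * indQ (G.σX (Fin.last m) = Fin.last m) := by
    rw [reindex_add_one2 (fun i j => indQ ((i:ℕ) < (j:ℕ)) * indQ ((G.xUR i:ℕ) < (G.xUR j:ℕ)))]
    simp only [hx]
    exact TE1 G.σX
  have hS2 : (∑ i : Fin (m+1), ∑ j : Fin (m+1),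
        indQ ((i:ℕ) ≤ (j:ℕ)) * indQ ((G.xUR i:ℕ) ≤ (G.σO j:ℕ)))
      = cnt2 G.σX G.σO + ((m:ℚ) - ((G.σX.symm (Fin.last m):ℕ):ℚ))
        + ((m:ℚ) - ((G.σX (Fin.last m):ℕ):ℚ))
        + ((m:ℚ)+1) * indQ (G.σX (Fin.last m) = Fin.last m) := by
    rw [reindex_add_one_left (fun i j => indQ ((i:ℕ) ≤ (j:ℕ)) * indQ ((G.xUR i:ℕ) ≤ (G.σO j:ℕ)))]
    simp only [hx]
    exact TE2 G.σX G.σO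
  have hS3 : (∑ i : Fin (m+1), ∑ j : Fin (m+1),
        indQ ((i:ℕ) < (j:ℕ)) * indQ ((G.σO i:ℕ) < (G.xUR j:ℕ)))
      = cnt2 G.σO G.σX + (∑ i : Fin (m+1), indQ ((G.σO.symm (G.σX i):ℕ) < (i:ℕ)))
        + cU G.σO G.σX
        - (((G.σX.symm (Fin.last m):ℕ):ℚ) + 1) - (((G.σX (Fin.last m):ℕ):ℚ) + 1)
        + ((m:ℚ)+1) * indQ (G.σX (Fin.last m) = Fin.last m) := by
    rw [hright (fun i j => indQ ((i:ℕ) < (j:ℕ)) * indQ ((G.σO i:ℕ) < (G.xUR j:ℕ)))]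
    simp only [hx]
    rw [Finset.sum_comm]
    exact TE3 G.σX G.σO hab
  have hS4 : (∑ i : Fin (m+1), ∑ j : Fin (m+1),
      indQ ((i:ℕ) < (j:ℕ)) * indQ ((G.σO i:ℕ) < (G.σO j:ℕ))) = cnt2 G.σO G.σO := rfl
  have hS2x : (∑ i : Fin (m+1), ∑ j : Fin (m+1),
        indQ ((i:ℕ) ≤ (j:ℕ)) * indQ ((G.xUR i:ℕ) ≤ (G.σX j:ℕ)))
      = cnt2 G.σX G.σX + ((m:ℚ) - ((G.σX.symm (Fin.last m):ℕ):ℚ))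
        + ((m:ℚ) - ((G.σX (Fin.last m):ℕ):ℚ))
        + ((m:ℚ)+1) * indQ (G.σX (Fin.last m) = Fin.last m) := by
    rw [reindex_add_one_left (fun i j => indQ ((i:ℕ) ≤ (j:ℕ)) * indQ ((G.xUR i:ℕ) ≤ (G.σX j:ℕ)))]
    simp only [hx]
    exact TE2 G.σX G.σX
  have hS3x : (∑ i : Fin (m+1), ∑ j : Fin (m+1),
        indQ ((i:ℕ) < (j:ℕ)) * indQ ((G.σX i:ℕ) < (G.xUR j:ℕ)))
      = cnt2 G.σX G.σX + ((m:ℚ)+1)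
        - (((G.σX.symm (Fin.last m):ℕ):ℚ) + 1) - (((G.σX (Fin.last m):ℕ):ℚ) + 1)
        + ((m:ℚ)+1) * indQ (G.σX (Fin.last m) = Fin.last m) := by
    rw [hright (fun i j => indQ ((i:ℕ) < (j:ℕ)) * indQ ((G.σX i:ℕ) < (G.xUR j:ℕ)))]
    simp only [hx]
    rw [Finset.sum_comm]
    exact TE3x G.σX
  have hS4x : (∑ i : Fin (m+1), ∑ j : Fin (m+1),
      indQ ((i:ℕ) < (j:ℕ)) * indQ ((G.σX i:ℕ) < (G.σX j:ℕ))) = cnt2 G.σX G.σX := rfl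
  have hM := Grid.M_decomp G G.xUR
  rw [hS1, hS2, hS3, hS4] at hM
  have hCLT := relCLT G.σX G.σO hab
  rw [hCLT] at hM
  have hMX := Grid.MX_decomp G G.xUR
  rw [hS1, hS2x, hS3x, hS4x] at hMX
  have hMXv : G.MX G.xUR = -(m:ℚ) := by
    rw [hMX]; ring
  have hW := Grid.writhe_eval G
  have hD := Grid.down_eval G
  have hU := Grid.up_eval G
  have hNE := NE_balance G.σX G.σO hab
  have hCU := CUfull G.σX G.σO hab
  have hc : ((G.cusps : ℕ) : ℚ) = ((G.downCusps:ℕ):ℚ) + ((G.upCusps:ℕ):ℚ) := by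
    rw [Grid.cusps]; push_cast; ring
  have htb : G.tb = -((G.writhe:ℤ):ℚ) - ((G.cusps:ℕ):ℚ)/2 := rfl
  have hrot : G.rot = (((G.downCusps:ℕ):ℚ) - ((G.upCusps:ℕ):ℚ))/2 := rfl
  have part1 : G.M G.xUR = G.tb - G.rot + 1 := by
    rw [hM, htb, hrot, hc, hW, hD, hU]
    linarith [hNE, hCU]
  refine ⟨part1, ?_⟩
  have hA := Grid.A_identity G G.xUR
  rw [hA, hMXv, part1]
  push_cast
  ring
end
end

section
/- Let G be a toroidal grid diagram of size n representing a knot. Then the canonical generator x^LL satisfies M(x^LL) = tb(G) + r(G) + 1 and A(x^LL) = (tb(G) + r(G) + 1)/2, where tb(G) = −writhe(K) − (1/2)·#{cusps of G} and r(G) = (1/2)·(#{downward cusps of G} − #{upward cusps of G}) are the Thurston–Bennequin invariant and rotation number of the oriented Legendrian knot associated to G. -/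
open Finset

noncomputable section

open scoped Classical

namespace GridAux


def ind (P : Prop) [Decidable P] : ℤ := if P then 1 else 0

lemma ind_spec (P : Prop) [Decidable P] : (P ∧ ind P = 1) ∨ (¬P ∧ ind P = 0) := by
  by_cases h : P <;> simp [ind, h]

@[simp] lemma ind_true : ind True = 1 := by simp [ind]
@[simp] lemma ind_false : ind False = 0 := by simp [ind]

lemma ind_congr {P Q : Prop} [Decidable P] [Decidable Q] (h : P ↔ Q) : ind P = ind Q := by
  simp only [ind, h]

lemma ind_neg {P : Prop} [Decidable P] (h : ¬ P) : ind P = 0 := by simp [ind, h]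

def dA (a b p q r s : ℕ) : ℤ :=
  ind (a < b ∧ p < q) + ind (a < b ∧ r < s) - ind (a ≤ b ∧ p ≤ s) - ind (b < a ∧ s < p)

def dW (a b p q r s : ℕ) : ℤ :=
    ind (p < r ∧ (min p r < q ∧ q < max p r) ∧ b < a)
  - ind (p < r ∧ (min p r < s ∧ s < max p r) ∧ b < a)
  - ind (r < p ∧ (min p r < q ∧ q < max p r) ∧ b < a)
  + ind (r < p ∧ (min p r < s ∧ s < max p r) ∧ b < a)

def dU (a b p q r s : ℕ) : ℤ :=
  ind (q = r ∧ b < a ∧ p < r) + ind (s = p ∧ a < b ∧ p < r)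

def dT (a b p q r s : ℕ) : ℤ := dA a b p q r s + dW a b p q r s + dU a b p q r s

set_option maxHeartbeats 800000 in
lemma dT_case_a (a b p q r s : ℕ) (hpr : p ≠ r) (hqs : q ≠ s)
    (hq : p ≠ q) (hr : r ≠ s) (hab : a < b) (hpr' : p < r) (hqs' : q < s) :
    dT a b p q r s + dT b a q p s r
      = ind (s = p ∧ p < r) + ind (q = r ∧ q < s) - 2 * ind (a = b ∧ p < r) := by
  unfold dT dA dW dU
  have n1 : ¬ b < a := by omega
  have n2 : ¬ b ≤ a := by omega
  have n3 : ¬ a = b := by omega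
  have l1 : a ≤ b := by omega
  have n4 : ¬ r < p := by omega
  have n5 : ¬ s < q := by omega
  have m1 : min p r = p := by omega
  have m2 : max p r = r := by omega
  have m3 : min q s = q := by omega
  have m4 : max q s = s := by omega
  simp only [ind_true, ind_false, hab, hpr', hqs', n1, n2, n3, n4, n5, l1, m1, m2, m3, m4,
    true_and, and_true, false_and, and_false, if_false, if_true,
    eq_self_iff_true, not_false_iff, ite_false, ite_true]
  have s1 := ind_spec (p < q)
  have s2 := ind_spec (r < s)
  have s3 := ind_spec (p ≤ s)
  have s4 := ind_spec (s = p)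
  have s5 := ind_spec (r < q)
  have s6 := ind_spec (q < p ∧ p < s)
  have s7 := ind_spec (q < r ∧ r < s)
  have s8 := ind_spec (p = s)
  have s9 := ind_spec (q = r)
  omega

set_option maxHeartbeats 800000 in
lemma dT_case_b (a b p q r s : ℕ) (hpr : p ≠ r) (hqs : q ≠ s)
    (hq : p ≠ q) (hr : r ≠ s) (hab : a < b) (hpr' : p < r) (hqs' : s < q) :
    dT a b p q r s + dT b a q p s r
      = ind (s = p ∧ p < r) + ind (q = r ∧ q < s) - 2 * ind (a = b ∧ p < r) := by
  unfold dT dA dW dU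
  have n1 : ¬ b < a := by omega
  have n2 : ¬ b ≤ a := by omega
  have n3 : ¬ a = b := by omega
  have l1 : a ≤ b := by omega
  have n4 : ¬ r < p := by omega
  have n5 : ¬ q < s := by omega
  have m1 : min p r = p := by omega
  have m2 : max p r = r := by omega
  have m3 : min q s = s := by omega
  have m4 : max q s = q := by omega
  simp only [ind_true, ind_false, hab, hpr', hqs', n1, n2, n3, n4, n5, l1, m1, m2, m3, m4,
    true_and, and_true, false_and, and_false, if_false, if_true,
    eq_self_iff_true, not_false_iff, ite_false, ite_true]
  have s1 := ind_spec (p < q)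
  have s2 := ind_spec (r < s)
  have s3 := ind_spec (p ≤ s)
  have s4 := ind_spec (s = p)
  have s5 := ind_spec (r < q)
  have s6 := ind_spec (s < p ∧ p < q)
  have s7 := ind_spec (s < r ∧ r < q)
  omega

set_option maxHeartbeats 800000 in
lemma dT_case_c (a b p q r s : ℕ) (hpr : p ≠ r) (hqs : q ≠ s)
    (hq : p ≠ q) (hr : r ≠ s) (hab : a < b) (hpr' : r < p) (hqs' : q < s) :
    dT a b p q r s + dT b a q p s r
      = ind (s = p ∧ p < r) + ind (q = r ∧ q < s) - 2 * ind (a = b ∧ p < r) := by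
  unfold dT dA dW dU
  have n1 : ¬ b < a := by omega
  have n2 : ¬ b ≤ a := by omega
  have n3 : ¬ a = b := by omega
  have l1 : a ≤ b := by omega
  have n4 : ¬ p < r := by omega
  have n5 : ¬ s < q := by omega
  have m1 : min p r = r := by omega
  have m2 : max p r = p := by omega
  have m3 : min q s = q := by omega
  have m4 : max q s = s := by omega
  simp only [ind_true, ind_false, hab, hpr', hqs', n1, n2, n3, n4, n5, l1, m1, m2, m3, m4,
    true_and, and_true, false_and, and_false, if_false, if_true,
    eq_self_iff_true, not_false_iff, ite_false, ite_true]
  have s1 := ind_spec (p < q)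
  have s2 := ind_spec (r < s)
  have s3 := ind_spec (p ≤ s)
  have s4 := ind_spec (r < q)
  have s5 := ind_spec (q < p ∧ p < s)
  have s6 := ind_spec (q < r ∧ r < s)
  have s7 := ind_spec (p = s)
  have s8 := ind_spec (q = r)
  omega

set_option maxHeartbeats 800000 in
lemma dT_case_d (a b p q r s : ℕ) (hpr : p ≠ r) (hqs : q ≠ s)
    (hq : p ≠ q) (hr : r ≠ s) (hab : a < b) (hpr' : r < p) (hqs' : s < q) :
    dT a b p q r s + dT b a q p s r
      = ind (s = p ∧ p < r) + ind (q = r ∧ q < s) - 2 * ind (a = b ∧ p < r) := by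
  unfold dT dA dW dU
  have n1 : ¬ b < a := by omega
  have n2 : ¬ b ≤ a := by omega
  have n3 : ¬ a = b := by omega
  have l1 : a ≤ b := by omega
  have n4 : ¬ p < r := by omega
  have n5 : ¬ q < s := by omega
  have m1 : min p r = r := by omega
  have m2 : max p r = p := by omega
  have m3 : min q s = s := by omega
  have m4 : max q s = q := by omega
  simp only [ind_true, ind_false, hab, hpr', hqs', n1, n2, n3, n4, n5, l1, m1, m2, m3, m4,
    true_and, and_true, false_and, and_false, if_false, if_true,
    eq_self_iff_true, not_false_iff, ite_false, ite_true]
  have s1 := ind_spec (p < q)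
  have s2 := ind_spec (r < s)
  have s3 := ind_spec (p ≤ s)
  have s4 := ind_spec (r < q)
  have s5 := ind_spec (s < p ∧ p < q)
  have s6 := ind_spec (s < r ∧ r < q)
  omega

lemma dT_key_lt (a b p q r s : ℕ) (hpr : p ≠ r) (hqs : q ≠ s)
    (hq : p ≠ q) (hr : r ≠ s) (hab : a < b) :
    dT a b p q r s + dT b a q p s r
      = ind (s = p ∧ p < r) + ind (q = r ∧ q < s) - 2 * ind (a = b ∧ p < r) := by
  rcases hpr.lt_or_gt with hpr' | hpr' <;> rcases hqs.lt_or_gt with hqs' | hqs'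
  · exact dT_case_a a b p q r s hpr hqs hq hr hab hpr' hqs'
  · exact dT_case_b a b p q r s hpr hqs hq hr hab hpr' hqs'
  · exact dT_case_c a b p q r s hpr hqs hq hr hab hpr' hqs'
  · exact dT_case_d a b p q r s hpr hqs hq hr hab hpr' hqs'

lemma dT_mid (a p r : ℕ) (hpr : p ≠ r) :
    dT a a p p r r + dT a a p p r r
      = ind (r = p ∧ p < r) + ind (p = r ∧ p < r) - 2 * ind (a = a ∧ p < r) := by
  unfold dT dA dW dU
  simp only [ind_true, ind_false, lt_irrefl, le_refl, false_and, and_false, true_and, and_true,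
    if_false, ite_false, eq_self_iff_true, if_true, ite_true, not_false_iff]
  have s1 := ind_spec (p ≤ r)
  have s2 := ind_spec (r ≤ p)
  have s3 := ind_spec (r = p)
  have s4 := ind_spec (p = r)
  have s5 := ind_spec (p < r)
  have s6 := ind_spec (r = p ∧ p < r)
  have s7 := ind_spec (p = r ∧ p < r)
  have s8 := ind_spec (a = a ∧ p < r)
  omega

lemma dT_key (a b p q r s : ℕ) (hpq : a = b ↔ p = q) (hrs : a = b ↔ r = s)
    (hpr : p ≠ r) (hqs : q ≠ s) :
    dT a b p q r s + dT b a q p s r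
      = ind (s = p ∧ p < r) + ind (q = r ∧ q < s) - 2 * ind (a = b ∧ p < r) := by
  rcases lt_trichotomy a b with hab | hab | hab
  · exact dT_key_lt a b p q r s hpr hqs (fun h => hab.ne (hpq.mpr h)) (fun h => hab.ne (hrs.mpr h)) hab
  · have hp : p = q := hpq.mp hab
    have hr : r = s := hrs.mp hab
    subst hab; subst hp; subst hr
    exact dT_mid a p r hpr
  · have h := dT_key_lt b a q p s r hqs hpr (fun h => hab.ne ((hpq.mpr h.symm).symm)) (fun h => hab.ne ((hrs.mpr h.symm).symm)) hab
    have e1 : ind (r = q ∧ q < s) = ind (q = r ∧ q < s) :=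
      ind_congr (by constructor <;> (rintro ⟨h1, h2⟩; exact ⟨h1.symm, h2⟩))
    have e2 : ind (p = s ∧ p < r) = ind (s = p ∧ p < r) :=
      ind_congr (by constructor <;> (rintro ⟨h1, h2⟩; exact ⟨h1.symm, h2⟩))
    have e3 : ind (b = a ∧ q < s) = 0 := ind_neg (by rintro ⟨h1, _⟩; omega)
    have e4 : ind (a = b ∧ p < r) = 0 := ind_neg (by rintro ⟨h1, _⟩; omega)
    omega


lemma ind_cast (P : Prop) [Decidable P] : ((ind P : ℤ) : ℚ) = if P then (1:ℚ) else 0 := by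
  unfold ind; split_ifs <;> simp

/-! ### Ifun bilinearity -/

lemma Ifun_eq_sum (f g : PtComb) {S T : Finset (ℝ × ℝ)} (hS : f.support ⊆ S)
    (hT : g.support ⊆ T) :
    Ifun f g = ∑ p ∈ S, ∑ q ∈ T, if p.1 < q.1 ∧ p.2 < q.2 then f p * g q else 0 := by
  unfold Ifun
  have h1 : ∀ p : ℝ × ℝ, ∑ q ∈ g.support, (if p.1 < q.1 ∧ p.2 < q.2 then f p * g q else 0)
      = ∑ q ∈ T, (if p.1 < q.1 ∧ p.2 < q.2 then f p * g q else 0) := fun p =>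
    Finset.sum_subset hT (fun q _ hq' => by
      rw [Finsupp.notMem_support_iff.mp hq', mul_zero, ite_self])
  simp only [h1]
  exact Finset.sum_subset hS (fun p _ hp' => Finset.sum_eq_zero fun q _ => by
    rw [Finsupp.notMem_support_iff.mp hp', zero_mul, ite_self])

lemma Ifun_zero_left (g : PtComb) : Ifun 0 g = 0 := by simp [Ifun]

lemma Ifun_zero_right (f : PtComb) : Ifun f 0 = 0 := by simp [Ifun]

lemma Ifun_add_left (f₁ f₂ g : PtComb) : Ifun (f₁ + f₂) g = Ifun f₁ g + Ifun f₂ g := by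
  rw [Ifun_eq_sum (f₁ + f₂) g (S := f₁.support ∪ f₂.support) (T := g.support)
      Finsupp.support_add subset_rfl,
    Ifun_eq_sum f₁ g (S := f₁.support ∪ f₂.support) Finset.subset_union_left subset_rfl,
    Ifun_eq_sum f₂ g (S := f₁.support ∪ f₂.support) Finset.subset_union_right subset_rfl,
    ← Finset.sum_add_distrib]
  refine Finset.sum_congr rfl fun p _ => ?_
  rw [← Finset.sum_add_distrib]
  refine Finset.sum_congr rfl fun q _ => ?_
  simp only [Finsupp.add_apply]
  split_ifs <;> ring

lemma Ifun_add_right (f g₁ g₂ : PtComb) : Ifun f (g₁ + g₂) = Ifun f g₁ + Ifun f g₂ := by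
  rw [Ifun_eq_sum f (g₁ + g₂) (S := f.support) (T := g₁.support ∪ g₂.support)
      subset_rfl Finsupp.support_add,
    Ifun_eq_sum f g₁ (T := g₁.support ∪ g₂.support) subset_rfl Finset.subset_union_left,
    Ifun_eq_sum f g₂ (T := g₁.support ∪ g₂.support) subset_rfl Finset.subset_union_right,
    ← Finset.sum_add_distrib]
  refine Finset.sum_congr rfl fun p _ => ?_
  rw [← Finset.sum_add_distrib]
  refine Finset.sum_congr rfl fun q _ => ?_
  simp only [Finsupp.add_apply]
  split_ifs <;> ring

lemma Ifun_smul_left (c : ℚ) (f g : PtComb) : Ifun (c • f) g = c * Ifun f g := by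
  rw [Ifun_eq_sum (c • f) g (S := f.support) (T := g.support) Finsupp.support_smul subset_rfl,
    Ifun, Finset.mul_sum]
  refine Finset.sum_congr rfl fun p _ => ?_
  rw [Finset.mul_sum]
  refine Finset.sum_congr rfl fun q _ => ?_
  simp only [Finsupp.smul_apply, smul_eq_mul]
  split_ifs <;> ring

lemma Ifun_smul_right (c : ℚ) (f g : PtComb) : Ifun f (c • g) = c * Ifun f g := by
  rw [Ifun_eq_sum f (c • g) (S := f.support) (T := g.support) subset_rfl Finsupp.support_smul,
    Ifun, Finset.mul_sum]
  refine Finset.sum_congr rfl fun p _ => ?_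
  rw [Finset.mul_sum]
  refine Finset.sum_congr rfl fun q _ => ?_
  simp only [Finsupp.smul_apply, smul_eq_mul]
  split_ifs <;> ring

lemma Ifun_neg_left (f g : PtComb) : Ifun (-f) g = -Ifun f g := by
  rw [← neg_one_smul ℚ f, Ifun_smul_left]; ring

lemma Ifun_neg_right (f g : PtComb) : Ifun f (-g) = -Ifun f g := by
  rw [← neg_one_smul ℚ g, Ifun_smul_right]; ring

lemma Ifun_sub_left (f g h : PtComb) : Ifun (f - g) h = Ifun f h - Ifun g h := by
  rw [sub_eq_add_neg, Ifun_add_left, Ifun_neg_left]; ring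

lemma Ifun_sub_right (f g h : PtComb) : Ifun f (g - h) = Ifun f g - Ifun f h := by
  rw [sub_eq_add_neg, Ifun_add_right, Ifun_neg_right]; ring

lemma Ifun_sum_left {ι : Type*} (s : Finset ι) (F : ι → PtComb) (g : PtComb) :
    Ifun (∑ i ∈ s, F i) g = ∑ i ∈ s, Ifun (F i) g := by
  induction s using Finset.cons_induction with
  | empty => simp [Ifun_zero_left]
  | cons a s ha ih => rw [Finset.sum_cons, Ifun_add_left, ih, Finset.sum_cons]

lemma Ifun_sum_right {ι : Type*} (s : Finset ι) (f : PtComb) (F : ι → PtComb) :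
    Ifun f (∑ i ∈ s, F i) = ∑ i ∈ s, Ifun f (F i) := by
  induction s using Finset.cons_induction with
  | empty => simp [Ifun_zero_right]
  | cons a s ha ih => rw [Finset.sum_cons, Ifun_add_right, ih, Finset.sum_cons]

lemma Ifun_single_single (p q : ℝ × ℝ) (a b : ℚ) :
    Ifun (Finsupp.single p a) (Finsupp.single q b)
      = if p.1 < q.1 ∧ p.2 < q.2 then a * b else 0 := by
  by_cases ha : a = 0
  · subst ha; rw [Finsupp.single_zero, Ifun_zero_left]; simp
  by_cases hb : b = 0
  · subst hb; rw [Finsupp.single_zero, Ifun_zero_right]; simp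
  rw [Ifun, Finsupp.support_single_ne_zero _ ha, Finsupp.support_single_ne_zero _ hb]
  simp

lemma Ifun_points {n : ℕ} (P Q : Fin n → ℝ × ℝ) :
    Ifun (∑ i : Fin n, Finsupp.single (P i) 1) (∑ k : Fin n, Finsupp.single (Q k) 1)
      = ∑ i : Fin n, ∑ k : Fin n,
          if (P i).1 < (Q k).1 ∧ (P i).2 < (Q k).2 then (1:ℚ) else 0 := by
  rw [Ifun_sum_left]
  refine Finset.sum_congr rfl fun i _ => ?_
  rw [Ifun_sum_right]
  refine Finset.sum_congr rfl fun k _ => ?_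
  rw [Ifun_single_single, mul_one]

lemma Jfun_self (f : PtComb) : Jfun f f = Ifun f f := by rw [Jfun]; ring

/-! ### half-integer comparison lemmas -/

lemma lt_add_half (a b : ℕ) : ((a:ℝ) < (b:ℝ) + 1/2) ↔ a ≤ b := by
  constructor
  · intro h
    by_contra h'
    push_neg at h'
    have : (b:ℝ) + 1 ≤ a := by exact_mod_cast h'
    linarith
  · intro h
    have : (a:ℝ) ≤ b := by exact_mod_cast h
    linarith

lemma add_half_lt (a b : ℕ) : ((a:ℝ) + 1/2 < (b:ℝ)) ↔ a < b := by
  constructor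
  · intro h
    have : (a:ℝ) < b := by linarith
    exact_mod_cast this
  · intro h
    have : (a:ℝ) + 1 ≤ b := by exact_mod_cast h
    linarith

lemma add_half_lt_add_half (a b : ℕ) : ((a:ℝ) + 1/2 < (b:ℝ) + 1/2) ↔ a < b := by
  rw [add_lt_add_iff_right, Nat.cast_lt]

end GridAux


namespace GridAux

section GridLemmas

variable {n : ℕ} (G : Grid n)

lemma val_min (a b : Fin n) : ((min a b : Fin n) : ℕ) = min (a:ℕ) (b:ℕ) := by
  rcases le_total a b with h | h
  · rw [min_eq_left h, (min_eq_left (show (a:ℕ) ≤ (b:ℕ) from h))]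
  · rw [min_eq_right h, (min_eq_right (show (b:ℕ) ≤ (a:ℕ) from h))]

lemma val_max (a b : Fin n) : ((max a b : Fin n) : ℕ) = max (a:ℕ) (b:ℕ) := by
  rcases le_total a b with h | h
  · rw [max_eq_right h, (max_eq_right (show (a:ℕ) ≤ (b:ℕ) from h))]
  · rw [max_eq_left h, (max_eq_left (show (b:ℕ) ≤ (a:ℕ) from h))]

/-- Evaluation of `Ifun` on generator points vs generator points. -/
lemma Ifun_pp : Ifun (Grid.pts G.σX) (Grid.pts G.σX)
    = ∑ i : Fin n, ∑ k : Fin n,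
        if (i:ℕ) < (k:ℕ) ∧ (G.σX i : ℕ) < (G.σX k : ℕ) then (1:ℚ) else 0 := by
  rw [Grid.pts, Ifun_points]
  exact Finset.sum_congr rfl fun i _ => Finset.sum_congr rfl fun k _ =>
    if_congr (and_congr Nat.cast_lt Nat.cast_lt) rfl rfl

lemma Ifun_pO : Ifun (Grid.pts G.σX) G.OO
    = ∑ i : Fin n, ∑ k : Fin n,
        if (i:ℕ) ≤ (k:ℕ) ∧ (G.σX i : ℕ) ≤ (G.σO k : ℕ) then (1:ℚ) else 0 := by
  rw [Grid.pts, Grid.OO]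
  unfold Grid.Opt
  rw [Ifun_points]
  exact Finset.sum_congr rfl fun i _ => Finset.sum_congr rfl fun k _ =>
    if_congr (and_congr (lt_add_half _ _) (lt_add_half _ _)) rfl rfl

lemma Ifun_Op : Ifun G.OO (Grid.pts G.σX)
    = ∑ i : Fin n, ∑ k : Fin n,
        if (i:ℕ) < (k:ℕ) ∧ (G.σO i : ℕ) < (G.σX k : ℕ) then (1:ℚ) else 0 := by
  rw [Grid.pts, Grid.OO]
  unfold Grid.Opt
  rw [Ifun_points]
  exact Finset.sum_congr rfl fun i _ => Finset.sum_congr rfl fun k _ =>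
    if_congr (and_congr (add_half_lt _ _) (add_half_lt _ _)) rfl rfl

lemma Ifun_OO : Ifun G.OO G.OO
    = ∑ i : Fin n, ∑ k : Fin n,
        if (i:ℕ) < (k:ℕ) ∧ (G.σO i : ℕ) < (G.σO k : ℕ) then (1:ℚ) else 0 := by
  rw [Grid.OO]
  unfold Grid.Opt
  rw [Ifun_points]
  exact Finset.sum_congr rfl fun i _ => Finset.sum_congr rfl fun k _ =>
    if_congr (and_congr (add_half_lt_add_half _ _) (add_half_lt_add_half _ _)) rfl rfl

lemma Ifun_XX : Ifun G.XX G.XX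
    = ∑ i : Fin n, ∑ k : Fin n,
        if (i:ℕ) < (k:ℕ) ∧ (G.σX i : ℕ) < (G.σX k : ℕ) then (1:ℚ) else 0 := by
  rw [Grid.XX]
  unfold Grid.Xpt
  rw [Ifun_points]
  exact Finset.sum_congr rfl fun i _ => Finset.sum_congr rfl fun k _ =>
    if_congr (and_congr (add_half_lt_add_half _ _) (add_half_lt_add_half _ _)) rfl rfl

lemma Ifun_pX : Ifun (Grid.pts G.σX) G.XX
    = ∑ i : Fin n, ∑ k : Fin n,
        if (i:ℕ) ≤ (k:ℕ) ∧ (G.σX i : ℕ) ≤ (G.σX k : ℕ) then (1:ℚ) else 0 := by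
  rw [Grid.pts, Grid.XX]
  unfold Grid.Xpt
  rw [Ifun_points]
  exact Finset.sum_congr rfl fun i _ => Finset.sum_congr rfl fun k _ =>
    if_congr (and_congr (lt_add_half _ _) (lt_add_half _ _)) rfl rfl

lemma Ifun_Xp : Ifun G.XX (Grid.pts G.σX)
    = ∑ i : Fin n, ∑ k : Fin n,
        if (i:ℕ) < (k:ℕ) ∧ (G.σX i : ℕ) < (G.σX k : ℕ) then (1:ℚ) else 0 := by
  rw [Grid.pts, Grid.XX]
  unfold Grid.Xpt
  rw [Ifun_points]
  exact Finset.sum_congr rfl fun i _ => Finset.sum_congr rfl fun k _ =>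
    if_congr (and_congr (add_half_lt _ _) (add_half_lt _ _)) rfl rfl


lemma M_eq : G.M G.xLL
    = ((∑ i : Fin n, ∑ k : Fin n,
        dA (i:ℕ) (k:ℕ) (G.σX i : ℕ) (G.σX k : ℕ) (G.σO i : ℕ) (G.σO k : ℕ) : ℤ) : ℚ) + 1 := by
  have hOp : (∑ i : Fin n, ∑ k : Fin n,
        if (i:ℕ) < (k:ℕ) ∧ (G.σO i : ℕ) < (G.σX k : ℕ) then (1:ℚ) else 0)
      = ∑ i : Fin n, ∑ k : Fin n,
        if (k:ℕ) < (i:ℕ) ∧ (G.σO k : ℕ) < (G.σX i : ℕ) then (1:ℚ) else 0 :=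
    Finset.sum_comm
  rw [Grid.M, Grid.xLL, Jfun_self, Ifun_sub_left, Ifun_sub_right, Ifun_sub_right,
    Ifun_pp, Ifun_pO, Ifun_Op, Ifun_OO, hOp]
  push_cast [dA, ind_cast]
  simp only [Finset.sum_add_distrib, Finset.sum_sub_distrib]
  ring

lemma A2_eq : 2 * G.A G.xLL = G.M G.xLL := by
  have hXp_pp : Ifun G.XX (Grid.pts G.σX) = Ifun (Grid.pts G.σX) (Grid.pts G.σX) := by
    rw [Ifun_pp, Ifun_Xp]
  have hXX_pp : Ifun G.XX G.XX = Ifun (Grid.pts G.σX) (Grid.pts G.σX) := by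
    rw [Ifun_pp, Ifun_XX]
  have hpX : Ifun (Grid.pts G.σX) G.XX
      = Ifun (Grid.pts G.σX) (Grid.pts G.σX) + (n : ℚ) := by
    rw [Ifun_pp, Ifun_pX]
    have point : ∀ i k : Fin n,
        (if (i:ℕ) ≤ (k:ℕ) ∧ (G.σX i : ℕ) ≤ (G.σX k : ℕ) then (1:ℚ) else 0)
        = (if (i:ℕ) < (k:ℕ) ∧ (G.σX i : ℕ) < (G.σX k : ℕ) then (1:ℚ) else 0)
          + (if i = k then (1:ℚ) else 0) := by
      intro i k
      by_cases h : i = k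
      · subst h; simp
      · have h1 : ¬ (i:ℕ) = (k:ℕ) := fun hh => h (Fin.val_eq_val i k |>.mp hh)
        have h2 : ¬ (G.σX i : ℕ) = (G.σX k : ℕ) := fun hh =>
          h (G.σX.injective (Fin.val_eq_val _ _ |>.mp hh))
        rw [if_neg h, if_congr (show ((i:ℕ) ≤ (k:ℕ) ∧ (G.σX i : ℕ) ≤ (G.σX k : ℕ)) ↔
            ((i:ℕ) < (k:ℕ) ∧ (G.σX i : ℕ) < (G.σX k : ℕ)) by omega) rfl rfl]
        ring
    calc ∑ i : Fin n, ∑ k : Fin n,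
          (if (i:ℕ) ≤ (k:ℕ) ∧ (G.σX i : ℕ) ≤ (G.σX k : ℕ) then (1:ℚ) else 0)
        = ∑ i : Fin n, ∑ k : Fin n,
            ((if (i:ℕ) < (k:ℕ) ∧ (G.σX i : ℕ) < (G.σX k : ℕ) then (1:ℚ) else 0)
              + (if i = k then (1:ℚ) else 0)) := by
          exact Finset.sum_congr rfl fun i _ => Finset.sum_congr rfl fun k _ => point i k
      _ = (∑ i : Fin n, ∑ k : Fin n,
            if (i:ℕ) < (k:ℕ) ∧ (G.σX i : ℕ) < (G.σX k : ℕ) then (1:ℚ) else 0) + (n:ℚ) := by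
          simp only [Finset.sum_add_distrib]
          congr 1
          have : ∀ i : Fin n, (∑ k : Fin n, if i = k then (1:ℚ) else 0) = 1 := by
            intro i
            simp [Finset.sum_ite_eq]
          rw [Finset.sum_congr rfl fun i _ => this i]
          simp [Finset.card_univ]
  rw [Grid.A, Grid.M, Grid.xLL, Jfun_self, Jfun]
  simp only [Ifun_sub_left, Ifun_sub_right, Ifun_add_left, Ifun_add_right,
    Ifun_smul_left, Ifun_smul_right]
  rw [hXp_pp, hXX_pp, hpX]
  ring


lemma sum_ind_perm (σ : Equiv.Perm (Fin n)) (c : Fin n) (f : Fin n → Prop)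
    [DecidablePred f] :
    (∑ k : Fin n, ind ((σ k : ℕ) = (c : ℕ) ∧ f k)) = ind (f (σ.symm c)) := by
  rw [Finset.sum_eq_single (σ.symm c)]
  · exact ind_congr (by simp [Equiv.apply_symm_apply])
  · intro k _ hk
    apply ind_neg
    rintro ⟨h1, -⟩
    exact hk (by
      have h2 : σ k = c := Fin.val_eq_val _ _ |>.mp h1
      rw [← h2, Equiv.symm_apply_apply])
  · intro h; exact absurd (Finset.mem_univ _) h

lemma up_eq : (G.upCusps : ℤ)
    = ∑ i : Fin n, ∑ k : Fin n,
        dU (i:ℕ) (k:ℕ) (G.σX i : ℕ) (G.σX k : ℕ) (G.σO i : ℕ) (G.σO k : ℕ) := by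
  have e1 : ∀ i : Fin n,
      (∑ k : Fin n, dU (i:ℕ) (k:ℕ) (G.σX i : ℕ) (G.σX k : ℕ) (G.σO i : ℕ) (G.σO k : ℕ))
        = ind (G.ONE i) + ind (G.XSW i) := by
    intro i
    unfold dU
    rw [Finset.sum_add_distrib]
    congr 1
    · rw [sum_ind_perm G.σX (G.σO i)
        (fun k => (k:ℕ) < (i:ℕ) ∧ (G.σX i : ℕ) < (G.σO i : ℕ))]
      exact ind_congr (by rw [Grid.ONE]; rw [Fin.lt_def, Fin.lt_def])
    · rw [sum_ind_perm G.σO (G.σX i)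
        (fun k => (i:ℕ) < (k:ℕ) ∧ (G.σX i : ℕ) < (G.σO i : ℕ))]
      exact ind_congr (by rw [Grid.XSW]; rw [Fin.lt_def, Fin.lt_def])
  rw [Finset.sum_congr rfl (fun i _ => e1 i), Finset.sum_add_distrib, Grid.upCusps]
  simp only [ind]
  push_cast [Finset.card_filter, apply_ite (fun x : ℕ => (x : ℤ))]
  norm_num


set_option maxHeartbeats 1600000 in
lemma cross_term (i j : Fin n) :
    (if G.Crossing i j then G.crossSign i j else 0)
      = ind ((G.σX i : ℕ) < (G.σO i : ℕ) ∧
            (min (G.σX i : ℕ) (G.σO i : ℕ) < (j:ℕ) ∧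
              (j:ℕ) < max (G.σX i : ℕ) (G.σO i : ℕ)) ∧ (G.σX.symm j : ℕ) < (i:ℕ))
        - ind ((G.σX i : ℕ) < (G.σO i : ℕ) ∧
            (min (G.σX i : ℕ) (G.σO i : ℕ) < (j:ℕ) ∧
              (j:ℕ) < max (G.σX i : ℕ) (G.σO i : ℕ)) ∧ (G.σO.symm j : ℕ) < (i:ℕ))
        - ind ((G.σO i : ℕ) < (G.σX i : ℕ) ∧
            (min (G.σX i : ℕ) (G.σO i : ℕ) < (j:ℕ) ∧
              (j:ℕ) < max (G.σX i : ℕ) (G.σO i : ℕ)) ∧ (G.σX.symm j : ℕ) < (i:ℕ))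
        + ind ((G.σO i : ℕ) < (G.σX i : ℕ) ∧
            (min (G.σX i : ℕ) (G.σO i : ℕ) < (j:ℕ) ∧
              (j:ℕ) < max (G.σX i : ℕ) (G.σO i : ℕ)) ∧ (G.σO.symm j : ℕ) < (i:ℕ)) := by
  have hx : ((G.σX.symm j : ℕ) = (i:ℕ)) ↔ ((j:ℕ) = (G.σX i : ℕ)) := by
    rw [Fin.val_eq_val, Fin.val_eq_val, Equiv.symm_apply_eq]
  have ho : ((G.σO.symm j : ℕ) = (i:ℕ)) ↔ ((j:ℕ) = (G.σO i : ℕ)) := by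
    rw [Fin.val_eq_val, Fin.val_eq_val, Equiv.symm_apply_eq]
  have hd : (G.σX i : ℕ) ≠ (G.σO i : ℕ) := fun h => G.disj i (Fin.val_eq_val _ _ |>.mp h)
  have s1 := ind_spec ((G.σX i : ℕ) < (G.σO i : ℕ) ∧
            (min (G.σX i : ℕ) (G.σO i : ℕ) < (j:ℕ) ∧
              (j:ℕ) < max (G.σX i : ℕ) (G.σO i : ℕ)) ∧ (G.σX.symm j : ℕ) < (i:ℕ))
  have s2 := ind_spec ((G.σX i : ℕ) < (G.σO i : ℕ) ∧
            (min (G.σX i : ℕ) (G.σO i : ℕ) < (j:ℕ) ∧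
              (j:ℕ) < max (G.σX i : ℕ) (G.σO i : ℕ)) ∧ (G.σO.symm j : ℕ) < (i:ℕ))
  have s3 := ind_spec ((G.σO i : ℕ) < (G.σX i : ℕ) ∧
            (min (G.σX i : ℕ) (G.σO i : ℕ) < (j:ℕ) ∧
              (j:ℕ) < max (G.σX i : ℕ) (G.σO i : ℕ)) ∧ (G.σX.symm j : ℕ) < (i:ℕ))
  have s4 := ind_spec ((G.σO i : ℕ) < (G.σX i : ℕ) ∧
            (min (G.σX i : ℕ) (G.σO i : ℕ) < (j:ℕ) ∧
              (j:ℕ) < max (G.σX i : ℕ) (G.σO i : ℕ)) ∧ (G.σO.symm j : ℕ) < (i:ℕ))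
  rw [Grid.Crossing, Grid.crossSign]
  simp only [Fin.lt_def, val_min, val_max]
  split_ifs <;> omega

lemma sum_symm_reindex (σ : Equiv.Perm (Fin n)) (F : Fin n → Fin n → ℤ) :
    (∑ j : Fin n, F j (σ.symm j)) = ∑ k : Fin n, F (σ k) k := by
  calc (∑ j : Fin n, F j (σ.symm j)) = ∑ k : Fin n, F (σ k) (σ.symm (σ k)) :=
        (Equiv.sum_comp σ (fun j => F j (σ.symm j))).symm
    _ = ∑ k : Fin n, F (σ k) k := by simp

lemma writhe_eq : G.writhe
    = ∑ i : Fin n, ∑ k : Fin n,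
        dW (i:ℕ) (k:ℕ) (G.σX i : ℕ) (G.σX k : ℕ) (G.σO i : ℕ) (G.σO k : ℕ) := by
  rw [Grid.writhe, Fintype.sum_prod_type]
  refine Finset.sum_congr rfl fun i _ => ?_
  rw [Finset.sum_congr rfl (fun j _ => cross_term G i j)]
  unfold dW
  simp only [Finset.sum_add_distrib, Finset.sum_sub_distrib]
  congr 1
  congr 1
  congr 1
  · exact sum_symm_reindex G.σX (fun j a => ind ((G.σX i : ℕ) < (G.σO i : ℕ) ∧
      (min (G.σX i : ℕ) (G.σO i : ℕ) < (j:ℕ) ∧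
        (j:ℕ) < max (G.σX i : ℕ) (G.σO i : ℕ)) ∧ (a : ℕ) < (i:ℕ)))
  · exact sum_symm_reindex G.σO (fun j a => ind ((G.σX i : ℕ) < (G.σO i : ℕ) ∧
      (min (G.σX i : ℕ) (G.σO i : ℕ) < (j:ℕ) ∧
        (j:ℕ) < max (G.σX i : ℕ) (G.σO i : ℕ)) ∧ (a : ℕ) < (i:ℕ)))
  · exact sum_symm_reindex G.σX (fun j a => ind ((G.σO i : ℕ) < (G.σX i : ℕ) ∧
      (min (G.σX i : ℕ) (G.σO i : ℕ) < (j:ℕ) ∧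
        (j:ℕ) < max (G.σX i : ℕ) (G.σO i : ℕ)) ∧ (a : ℕ) < (i:ℕ)))
  · exact sum_symm_reindex G.σO (fun j a => ind ((G.σO i : ℕ) < (G.σX i : ℕ) ∧
      (min (G.σX i : ℕ) (G.σO i : ℕ) < (j:ℕ) ∧
        (j:ℕ) < max (G.σX i : ℕ) (G.σO i : ℕ)) ∧ (a : ℕ) < (i:ℕ)))


lemma sum_dT_zero :
    (∑ i : Fin n, ∑ k : Fin n,
      dT (i:ℕ) (k:ℕ) (G.σX i : ℕ) (G.σX k : ℕ) (G.σO i : ℕ) (G.σO k : ℕ)) = 0 := by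
  have hswap : (∑ i : Fin n, ∑ k : Fin n,
      dT (k:ℕ) (i:ℕ) (G.σX k : ℕ) (G.σX i : ℕ) (G.σO k : ℕ) (G.σO i : ℕ))
      = ∑ i : Fin n, ∑ k : Fin n,
      dT (i:ℕ) (k:ℕ) (G.σX i : ℕ) (G.σX k : ℕ) (G.σO i : ℕ) (G.σO k : ℕ) :=
    Finset.sum_comm
  have hkey : ∀ i k : Fin n,
      dT (i:ℕ) (k:ℕ) (G.σX i : ℕ) (G.σX k : ℕ) (G.σO i : ℕ) (G.σO k : ℕ)
      + dT (k:ℕ) (i:ℕ) (G.σX k : ℕ) (G.σX i : ℕ) (G.σO k : ℕ) (G.σO i : ℕ)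
      = ind ((G.σO k : ℕ) = (G.σX i : ℕ) ∧ (G.σX i : ℕ) < (G.σO i : ℕ))
        + ind ((G.σX k : ℕ) = (G.σO i : ℕ) ∧ (G.σX k : ℕ) < (G.σO k : ℕ))
        - 2 * ind ((i:ℕ) = (k:ℕ) ∧ (G.σX i : ℕ) < (G.σO i : ℕ)) := by
    intro i k
    refine dT_key _ _ _ _ _ _ ?_ ?_ ?_ ?_
    · rw [Fin.val_eq_val, Fin.val_eq_val, Equiv.apply_eq_iff_eq]
    · rw [Fin.val_eq_val, Fin.val_eq_val, Equiv.apply_eq_iff_eq]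
    · exact fun h => G.disj i (Fin.val_eq_val _ _ |>.mp h)
    · exact fun h => G.disj k (Fin.val_eq_val _ _ |>.mp h)
  have c1 : (∑ i : Fin n, ∑ k : Fin n,
      ind ((G.σO k : ℕ) = (G.σX i : ℕ) ∧ (G.σX i : ℕ) < (G.σO i : ℕ)))
      = ∑ i : Fin n, ind ((G.σX i : ℕ) < (G.σO i : ℕ)) :=
    Finset.sum_congr rfl fun i _ =>
      sum_ind_perm G.σO (G.σX i) (fun _ => (G.σX i : ℕ) < (G.σO i : ℕ))
  have c2 : (∑ i : Fin n, ∑ k : Fin n,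
      ind ((G.σX k : ℕ) = (G.σO i : ℕ) ∧ (G.σX k : ℕ) < (G.σO k : ℕ)))
      = ∑ k : Fin n, ind ((G.σX k : ℕ) < (G.σO k : ℕ)) := by
    rw [Finset.sum_comm]
    refine Finset.sum_congr rfl fun k _ => ?_
    have e : ∀ i : Fin n,
        ind ((G.σX k : ℕ) = (G.σO i : ℕ) ∧ (G.σX k : ℕ) < (G.σO k : ℕ))
        = ind ((G.σO i : ℕ) = (G.σX k : ℕ) ∧ (G.σX k : ℕ) < (G.σO k : ℕ)) := fun i =>
      ind_congr (by rw [eq_comm])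
    rw [Finset.sum_congr rfl fun i _ => e i]
    exact sum_ind_perm G.σO (G.σX k) (fun _ => (G.σX k : ℕ) < (G.σO k : ℕ))
  have c3 : (∑ i : Fin n, ∑ k : Fin n,
      ind ((i:ℕ) = (k:ℕ) ∧ (G.σX i : ℕ) < (G.σO i : ℕ)))
      = ∑ i : Fin n, ind ((G.σX i : ℕ) < (G.σO i : ℕ)) := by
    refine Finset.sum_congr rfl fun i _ => ?_
    have e : ∀ k : Fin n,
        ind ((i:ℕ) = (k:ℕ) ∧ (G.σX i : ℕ) < (G.σO i : ℕ))
        = ind (((Equiv.refl (Fin n)) k : ℕ) = (i:ℕ) ∧ (G.σX i : ℕ) < (G.σO i : ℕ)) := fun k =>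
      ind_congr (by rw [Equiv.refl_apply, eq_comm])
    rw [Finset.sum_congr rfl fun k _ => e k]
    exact sum_ind_perm (Equiv.refl (Fin n)) i (fun _ => (G.σX i : ℕ) < (G.σO i : ℕ))
  have h2 : (∑ i : Fin n, ∑ k : Fin n,
      dT (i:ℕ) (k:ℕ) (G.σX i : ℕ) (G.σX k : ℕ) (G.σO i : ℕ) (G.σO k : ℕ))
      + (∑ i : Fin n, ∑ k : Fin n,
      dT (i:ℕ) (k:ℕ) (G.σX i : ℕ) (G.σX k : ℕ) (G.σO i : ℕ) (G.σO k : ℕ)) = 0 := by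
    nth_rewrite 2 [← hswap]
    rw [← Finset.sum_add_distrib]
    rw [Finset.sum_congr rfl fun i _ => (Finset.sum_add_distrib).symm]
    rw [Finset.sum_congr rfl fun i (_ : i ∈ Finset.univ) =>
      Finset.sum_congr rfl fun k (_ : k ∈ Finset.univ) => hkey i k]
    simp only [Finset.sum_add_distrib, Finset.sum_sub_distrib, ← Finset.mul_sum]
    rw [c1, c2, c3]
    ring
  omega

end GridLemmas

end GridAux

/-- For a toroidal grid diagram `G` of size `n` representing a knot,
the canonical generator `x^LL` satisfies `M(x^LL) = tb + r + 1` and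
`A(x^LL) = (tb + r + 1)/2`, where `tb` and `r` are the Thurston–Bennequin invariant
and rotation number of the associated oriented Legendrian knot. -/
theorem gradings_xLL {n : ℕ} [NeZero n] (hn : 2 ≤ n) (G : Grid n) (hK : G.RepKnot) :
    G.M G.xLL = G.tb + G.rot + 1 ∧ G.A G.xLL = (G.tb + G.rot + 1) / 2 := by
  have hsplit : (∑ i : Fin n, ∑ k : Fin n,
      GridAux.dT (i:ℕ) (k:ℕ) (G.σX i : ℕ) (G.σX k : ℕ) (G.σO i : ℕ) (G.σO k : ℕ))
      = (∑ i : Fin n, ∑ k : Fin n,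
          GridAux.dA (i:ℕ) (k:ℕ) (G.σX i : ℕ) (G.σX k : ℕ) (G.σO i : ℕ) (G.σO k : ℕ))
        + (∑ i : Fin n, ∑ k : Fin n,
          GridAux.dW (i:ℕ) (k:ℕ) (G.σX i : ℕ) (G.σX k : ℕ) (G.σO i : ℕ) (G.σO k : ℕ))
        + (∑ i : Fin n, ∑ k : Fin n,
          GridAux.dU (i:ℕ) (k:ℕ) (G.σX i : ℕ) (G.σX k : ℕ) (G.σO i : ℕ) (G.σO k : ℕ)) := by
    simp only [GridAux.dT, Finset.sum_add_distrib]
  have hzero := GridAux.sum_dT_zero G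
  rw [hsplit] at hzero
  have hwr := GridAux.writhe_eq G
  have hup := GridAux.up_eq G
  have hdA : (∑ i : Fin n, ∑ k : Fin n,
      GridAux.dA (i:ℕ) (k:ℕ) (G.σX i : ℕ) (G.σX k : ℕ) (G.σO i : ℕ) (G.σO k : ℕ))
      = -G.writhe - (G.upCusps : ℤ) := by omega
  have hM : G.M G.xLL = -(G.writhe : ℚ) - (G.upCusps : ℚ) + 1 := by
    rw [GridAux.M_eq G, hdA]; push_cast; ring
  have htb : G.tb + G.rot + 1 = -(G.writhe : ℚ) - (G.upCusps : ℚ) + 1 := by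
    rw [Grid.tb, Grid.rot, Grid.cusps]; push_cast; ring
  have h2A := GridAux.A2_eq G
  constructor
  · rw [hM, htb]
  · rw [htb, ← hM]; linarith
end
end

section
/- Let G be a toroidal grid diagram of size n representing a knot and let x^UR be its canonical generator. Then for every generator y ∈ S(G) and every rectangle r ∈ Rect(x^UR, y), at least one X-marking of G lies in the interior of r. In particular, there is no rectangle connecting x^UR to any generator whose interior is disjoint from 𝕏, so x^UR is a cycle for the differential of the combinatorial knot Floer complex, which counts empty rectangles whose interiors are disjoint from 𝕏. -/
open Finset

noncomputable section

open scoped Classical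

/-- A rectangle on the torus `ℝ²/nℤ²` with sides on the grid lines: it has lower-left
corner at the lattice point `(c, r)`, width `w` and height `h`, with side lengths
in `(0, n)`. -/
structure Rect (n : ℕ) where
  c : Fin n
  r : Fin n
  w : ℕ
  h : ℕ
  wpos : 0 < w
  wlt : w < n
  hpos : 0 < h
  hlt : h < n

namespace Rect

variable {n : ℕ} [NeZero n]

open Fin.NatCast in
/-- `R` connects the generator `x` to the generator `y`: the lower-left and upper-right
corners of `R` are points of `x`, the upper-left and lower-right corners are points of
`y`, and `x` and `y` agree at all other columns (so they differ in exactly two points). -/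
def Connects (R : Rect n) (x y : Equiv.Perm (Fin n)) : Prop :=
  x R.c = R.r ∧
  x (R.c + (R.w : Fin n)) = R.r + (R.h : Fin n) ∧
  y R.c = R.r + (R.h : Fin n) ∧
  y (R.c + (R.w : Fin n)) = R.r ∧
  ∀ k : Fin n, k ≠ R.c → k ≠ R.c + (R.w : Fin n) → x k = y k

/-- The `X`-marking of column `k` lies in the interior of `R` (on the torus). -/
def XIn (G : Grid n) (R : Rect n) (k : Fin n) : Prop :=
  ((k - R.c : Fin n) : ℕ) < R.w ∧ ((G.σX k - R.r : Fin n) : ℕ) < R.h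

/-- The `O`-marking of column `k` lies in the interior of `R` (on the torus). -/
def OIn (G : Grid n) (R : Rect n) (k : Fin n) : Prop :=
  ((k - R.c : Fin n) : ℕ) < R.w ∧ ((G.σO k - R.r : Fin n) : ℕ) < R.h

/-- The number of `O`-markings of `G` in the interior of `R`. -/
def Ocnt (G : Grid n) (R : Rect n) : ℕ :=
  (univ.filter fun k => R.OIn G k).card

end Rect

/-- Let `G` be a toroidal grid diagram of size `n` representing a knot.
Then every rectangle connecting the canonical generator `x^UR` to any generator `y`
contains an `X`-marking of `G` in its interior.  (Hence `x^UR` is a cycle for the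
differential of the combinatorial knot Floer complex, which counts empty rectangles
whose interiors are disjoint from `𝕏`.) -/
theorem xUR_is_cycle {n : ℕ} [NeZero n] (hn : 2 ≤ n) (G : Grid n) (hK : G.RepKnot)
    (y : Equiv.Perm (Fin n)) (R : Rect n) (hR : R.Connects G.xUR y) :
    ∃ k : Fin n, R.XIn G k := by
  obtain ⟨h1, h2, h3, h4, h5⟩ := hR
  have hwlt := R.wlt
  have hhlt := R.hlt
  have hwpos := R.wpos
  have hhpos := R.hpos
  open Fin.NatCast in
  have castw : ((R.w : ℕ) : Fin n) = ((R.w - 1 : ℕ) : Fin n) + 1 := by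
    conv_lhs => rw [show (R.w : ℕ) = (R.w - 1) + 1 by omega]
    push_cast
    ring
  open Fin.NatCast in
  have casth : ((R.h : ℕ) : Fin n) = ((R.h - 1 : ℕ) : Fin n) + 1 := by
    conv_lhs => rw [show (R.h : ℕ) = (R.h - 1) + 1 by omega]
    push_cast
    ring
  open Fin.NatCast in
  refine ⟨R.c + (R.w : Fin n) - 1, ?_, ?_⟩
  open Fin.NatCast in
  · have e : (R.c + (R.w : Fin n) - 1) - R.c = ((R.w - 1 : ℕ) : Fin n) := by
      rw [castw]; abel
    rw [e, Fin.val_cast_of_lt (by omega)]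
    omega
  open Fin.NatCast in
  · have hσ : G.σX (R.c + (R.w : Fin n) - 1) = R.r + (R.h : Fin n) - 1 := by
      have h2' : G.σX (R.c + (R.w : Fin n) - 1) + 1 = R.r + (R.h : Fin n) := by
        simpa [Grid.xUR] using h2
      exact eq_sub_of_add_eq h2'
    have e : G.σX (R.c + (R.w : Fin n) - 1) - R.r = ((R.h - 1 : ℕ) : Fin n) := by
      rw [hσ, casth]; abel
    rw [e, Fin.val_cast_of_lt (by omega)]
    omega
end
end

section
/- Let G be a toroidal grid diagram of size n representing a knot and let x^LL be its canonical generator. Then for every generator y ∈ S(G) and every rectangle r ∈ Rect(x^LL, y), at least one X-marking of G lies in the interior of r. In particular, there is no rectangle connecting x^LL to any generator whose interior is disjoint from 𝕏, so x^LL is a cycle for the differential of the combinatorial knot Floer complex, which counts empty rectangles whose interiors are disjoint from 𝕏. -/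
open Finset

noncomputable section

open scoped Classical

/-- Let `G` be a toroidal grid diagram of size `n` representing a knot.
Then every rectangle connecting the canonical generator `x^LL` to any generator `y`
contains an `X`-marking of `G` in its interior.  (Hence `x^LL` is a cycle for the
differential of the combinatorial knot Floer complex, which counts empty rectangles
whose interiors are disjoint from `𝕏`.) -/
theorem xLL_is_cycle {n : ℕ} [NeZero n] (hn : 2 ≤ n) (G : Grid n) (hK : G.RepKnot)
    (y : Equiv.Perm (Fin n)) (R : Rect n) (hR : R.Connects G.xLL y) :
    ∃ k : Fin n, R.XIn G k := by
  refine ⟨R.c, ?_, ?_⟩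
  · simpa using R.wpos
  · have h1 : G.σX R.c = R.r := hR.1
    simpa [h1] using R.hpos
end
end
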